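/- arXiv:1710.00313 — 10 statements merged into one kernel-verified Lean document; each statement's English description precedes it below -/
import Mathlib

section
/- If a continuous self-map f of a compact metric space X has the limit shadowing property, then the restriction of f to the non-wandering set Ω(f) has the shadowing property. -/
open Filter Topology

variable {X : Type*} [MetricSpace X]

/-- `x` is a δ-pseudo orbit of `f`. -/
def IsPseudoOrbit (f : X → X) (δ : ℝ) (x : ℕ → X) : Prop :=
  ∀ i, dist (f (x i)) (x (i + 1)) ≤ δ

/-- `x` is a limit pseudo orbit of `f`. -/
def IsLimitPseudoOrbit (f : X → X) (x : ℕ → X) : Prop :=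
  Tendsto (fun i => dist (f (x i)) (x (i + 1))) atTop (nhds 0)

/-- `y` ε-shadows the sequence `x`. -/
def Shadows (f : X → X) (ε : ℝ) (x : ℕ → X) (y : X) : Prop :=
  ∀ i, dist (x i) (f^[i] y) ≤ ε

/-- `y` is a limit shadowing point of the sequence `x`. -/
def LimitShadows (f : X → X) (x : ℕ → X) (y : X) : Prop :=
  Tendsto (fun i => dist (x i) (f^[i] y)) atTop (nhds 0)

/-- the shadowing property. -/
def HasShadowing (f : X → X) : Prop :=
  ∀ ε > 0, ∃ δ > 0, ∀ x : ℕ → X, IsPseudoOrbit f δ x → ∃ y, Shadows f ε x y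

/-- the limit shadowing property. -/
def HasLimitShadowing (f : X → X) : Prop :=
  ∀ x : ℕ → X, IsLimitPseudoOrbit f x → ∃ y, LimitShadows f x y

/-- the non-wandering set Ω(f). -/
def NonWandering (f : X → X) : Set X :=
  {x | ∀ U ∈ nhds x, ∃ n > 0, (f^[n] '' U ∩ U).Nonempty}

/-- there is a δ-chain of `f` from `x` to `y` lying in `S`. -/
def ChainFromIn (f : X → X) (S : Set X) (δ : ℝ) (x y : X) : Prop :=
  ∃ k ≥ 1, ∃ c : ℕ → X, c 0 = x ∧ c k = y ∧ (∀ i ≤ k, c i ∈ S) ∧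
    ∀ i < k, dist (f (c i)) (c (i + 1)) ≤ δ

/-- the chain recurrent set CR(f). -/
def ChainRecurrent (f : X → X) : Set X :=
  {x | ∀ δ > 0, ChainFromIn f Set.univ δ x x}

/-- the closure of the forward orbit of `x`. -/
def orbitClosure (f : X → X) (x : X) : Set X := closure (Set.range fun n => f^[n] x)

/-- `x` is a minimal point of `f`. -/
def IsMinimalPoint (f : X → X) (x : X) : Prop :=
  ∀ K ⊆ orbitClosure f x, K.Nonempty → IsClosed K → Set.MapsTo f K K → K = orbitClosure f x

/-- the set of minimal points M(f). -/
def MinimalPoints (f : X → X) : Set X := {x | IsMinimalPoint f x}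

/-- `f` is an equicontinuous map. -/
def EquicontMap (f : X → X) : Prop :=
  ∀ ε > 0, ∃ δ > 0, ∀ x y : X, dist x y ≤ δ → ∀ n, dist (f^[n] x) (f^[n] y) ≤ ε

set_option linter.unusedSectionVars false
namespace LSaux

variable {X : Type*} [MetricSpace X]

private lemma odp (k : ℕ) : (0:ℝ) < 1/(k+1) := by positivity

private lemma odm {a b : ℕ} (hab : a ≤ b) : (1:ℝ)/(b+1) ≤ 1/(a+1) := by
  apply one_div_le_one_div_of_le (by positivity)
  exact_mod_cast Nat.succ_le_succ hab

/-- finite chain with error bound: entries `c 0 .. c n`. -/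
def FChain (f : X → X) (θ : ℝ) (c : ℕ → X) (n : ℕ) : Prop :=
  ∀ i < n, dist (f (c i)) (c (i + 1)) ≤ θ

/-- concatenation of chains -/
def capp (c₁ : ℕ → X) (n₁ : ℕ) (c₂ : ℕ → X) : ℕ → X :=
  fun i => if i < n₁ then c₁ i else c₂ (i - n₁)

lemma capp_lt {c₁ : ℕ → X} {n₁ i : ℕ} {c₂ : ℕ → X} (h : i < n₁) :
    capp c₁ n₁ c₂ i = c₁ i := if_pos h

lemma capp_ge {c₁ : ℕ → X} {n₁ i : ℕ} {c₂ : ℕ → X} (h : n₁ ≤ i) :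
    capp c₁ n₁ c₂ i = c₂ (i - n₁) := if_neg (by omega)

lemma fchain_capp {f : X → X} {θ : ℝ} {c₁ c₂ : ℕ → X} {n₁ n₂ : ℕ}
    (h₁ : FChain f θ c₁ n₁) (h₂ : FChain f θ c₂ n₂) (hh : c₂ 0 = c₁ n₁) :
    FChain f θ (capp c₁ n₁ c₂) (n₁ + n₂) := by
  intro i hi
  rcases lt_trichotomy (i+1) n₁ with h | h | h
  · rw [capp_lt (by omega), capp_lt h]
    exact h₁ i (by omega)
  · rw [capp_lt (by omega), capp_ge (by omega)]
    have h0 : i + 1 - n₁ = 0 := by omega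
    rw [h0, hh, ← h]
    exact h₁ i (by omega)
  · rw [capp_ge (by omega), capp_ge (by omega)]
    have h0 : i + 1 - n₁ = (i - n₁) + 1 := by omega
    rw [h0]
    exact h₂ (i - n₁) (by omega)

section Machine

def mloc (l : ℕ → ℕ) : ℕ → ℕ × ℕ
  | 0 => (0, 0)
  | i + 1 =>
      if (mloc l i).2 + 1 < l (mloc l i).1 then ((mloc l i).1, (mloc l i).2 + 1)
      else ((mloc l i).1 + 1, 0)

def tpos (l : ℕ → ℕ) : ℕ → ℕ
  | 0 => 0
  | k + 1 => tpos l k + l k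

variable {l : ℕ → ℕ}

lemma mloc_snd_lt (hl : ∀ k, 1 ≤ l k) : ∀ i, (mloc l i).2 < l (mloc l i).1 := by
  intro i
  induction i with
  | zero => simpa [mloc] using Nat.lt_of_lt_of_le Nat.zero_lt_one (hl 0)
  | succ i ih =>
      rw [mloc]
      split
      · next h => simpa using h
      · simpa using Nat.lt_of_lt_of_le Nat.zero_lt_one (hl _)

lemma mloc_fst_le_succ (i : ℕ) : (mloc l i).1 ≤ (mloc l (i+1)).1 := by
  rw [mloc]; split <;> simp

lemma tpos_ge (hl : ∀ k, 1 ≤ l k) : ∀ k, k ≤ tpos l k := by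
  intro k
  induction k with
  | zero => simp [tpos]
  | succ k ih => rw [tpos]; have := hl k; omega

lemma tpos_mono (hk : k ≤ k') : tpos l k ≤ tpos l k' := by
  induction k' with
  | zero => simp_all
  | succ k' ih =>
      rcases Nat.lt_or_ge k (k'+1) with h | h
      · have := ih (by omega)
        rw [tpos]; omega
      · have : k = k' + 1 := by omega
        subst this; rfl

lemma mloc_tpos_add (hl : ∀ k, 1 ≤ l k) : ∀ k j, j < l k → mloc l (tpos l k + j) = (k, j) := by
  intro k
  induction k with
  | zero =>
      intro j
      induction j with
      | zero => intro _; simp [mloc, tpos]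
      | succ j ihj =>
          intro hj
          have h1 : mloc l (tpos l 0 + j) = (0, j) := ihj (by omega)
          have h2 : tpos l 0 + (j+1) = (tpos l 0 + j) + 1 := by omega
          rw [h2, mloc, h1]
          simp [hj]
  | succ k ihk =>
      have base : mloc l (tpos l (k+1) + 0) = (k+1, 0) := by
        have h1 : mloc l (tpos l k + (l k - 1)) = (k, l k - 1) := ihk _ (by have := hl k; omega)
        have h2 : tpos l (k+1) + 0 = (tpos l k + (l k - 1)) + 1 := by
          rw [tpos]; have := hl k; omega
        rw [h2, mloc, h1]
        have h3 : ¬ ((l k - 1) + 1 < l k) := by omega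
        simp [h3]
      intro j
      induction j with
      | zero => intro _; exact base
      | succ j ihj =>
          intro hj
          have h1 := ihj (by omega)
          have h2 : tpos l (k+1) + (j+1) = (tpos l (k+1) + j) + 1 := by omega
          rw [h2, mloc, h1]
          simp [hj]

lemma stage_ge (hl : ∀ k, 1 ≤ l k) : ∀ i k, tpos l k ≤ i → k ≤ (mloc l i).1 := by
  intro i
  induction i with
  | zero =>
      intro k hk
      have := tpos_ge hl k
      have hk0 : k = 0 := by omega
      subst hk0; omega
  | succ i ih =>
      intro k hk
      by_cases h : tpos l k ≤ i
      · exact le_trans (ih k h) (mloc_fst_le_succ _)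
      · have hk1 : tpos l k = i + 1 := by omega
        have h2 := mloc_tpos_add hl k 0 (by have := hl k; omega)
        rw [add_zero] at h2
        rw [← hk1, h2]

end Machine


end LSaux

namespace LSaux

section Machine2
variable {X : Type*} [MetricSpace X]

lemma machine [CompactSpace X] (f : X → X) (h : HasLimitShadowing f)
    (σ : ℕ → ℕ → X) (l : ℕ → ℕ) (ϑ : ℕ → ℝ) (hl : ∀ k, 1 ≤ l k)
    (hϑ : Tendsto ϑ atTop (𝓝 0))
    (H1 : ∀ k j, j + 1 < l k → dist (f (σ k j)) (σ k (j + 1)) ≤ ϑ k)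
    (H2 : ∀ k, dist (f (σ k (l k - 1))) (σ (k + 1) 0) ≤ ϑ k) :
    ∃ y : X, ∀ ε > 0, ∃ K, ∀ k, K ≤ k → ∀ j < l k, dist (σ k j) (f^[tpos l k + j] y) ≤ ε := by
  set z : ℕ → X := fun i => σ (mloc l i).1 (mloc l i).2 with hz
  have herr : ∀ i, dist (f (z i)) (z (i + 1)) ≤ ϑ ((mloc l i).1) := by
    intro i
    have hlt := mloc_snd_lt hl i
    by_cases hc : (mloc l i).2 + 1 < l (mloc l i).1
    · have hstep : mloc l (i+1) = ((mloc l i).1, (mloc l i).2 + 1) := by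
        rw [mloc]; simp [hc]
      simp only [hz, hstep]
      exact H1 _ _ hc
    · have hj : (mloc l i).2 = l (mloc l i).1 - 1 := by omega
      have hstep : mloc l (i+1) = ((mloc l i).1 + 1, 0) := by
        rw [mloc]; simp [hc]
      simp only [hz, hstep]
      rw [hj]
      exact H2 _
  have hstage : Tendsto (fun i => (mloc l i).1) atTop atTop := by
    apply tendsto_atTop_atTop.mpr
    intro K
    exact ⟨tpos l K, fun i hi => stage_ge hl i K hi⟩
  have hzlim : IsLimitPseudoOrbit f z := by
    unfold IsLimitPseudoOrbit
    exact squeeze_zero (fun i => dist_nonneg) herr (hϑ.comp hstage)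
  obtain ⟨y, hy⟩ := h z hzlim
  refine ⟨y, ?_⟩
  intro ε hε
  obtain ⟨N, hN⟩ := Metric.tendsto_atTop.mp hy ε hε
  refine ⟨N, fun k hk j hj => ?_⟩
  have hidx : N ≤ tpos l k + j :=
    le_trans (le_trans (tpos_ge hl N) (tpos_mono hk)) (Nat.le_add_right _ _)
  have h1 := hN _ hidx
  rw [Real.dist_eq, sub_zero, abs_of_nonneg dist_nonneg] at h1
  have h2 : z (tpos l k + j) = σ k j := by
    rw [hz]; simp only [mloc_tpos_add hl k j hj]
  rw [h2] at h1
  exact le_of_lt h1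

/-- limits along strictly monotone iterate times are nonwandering. -/
lemma nwOfReturn (f : X → X) {v w : X} {m : ℕ → ℕ} (hm : StrictMono m)
    (hlim : Tendsto (fun t => f^[m t] v) atTop (𝓝 w)) : w ∈ NonWandering f := by
  intro U hU
  obtain ⟨V, hVU, hVopen, hwV⟩ := mem_nhds_iff.mp hU
  obtain ⟨T, hT⟩ := eventually_atTop.mp (hlim (hVopen.mem_nhds hwV))
  have hlt : m T < m (T+1) := hm (by omega)
  refine ⟨m (T+1) - m T, by omega, f^[m (T+1)] v, ⟨f^[m T] v, hVU (hT T le_rfl), ?_⟩,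
    hVU (hT (T+1) (by omega))⟩
  rw [← Function.iterate_add_apply]
  congr 1
  omega

/-- limits of nonwandering points are nonwandering. -/
lemma nwOfLimit (f : X → X) {w : ℕ → X} {y : X} (hw : ∀ n, w n ∈ NonWandering f)
    (hlim : Tendsto w atTop (𝓝 y)) : y ∈ NonWandering f := by
  intro U hU
  obtain ⟨V, hVU, hVopen, hyV⟩ := mem_nhds_iff.mp hU
  obtain ⟨T, hT⟩ := eventually_atTop.mp (hlim (hVopen.mem_nhds hyV))
  obtain ⟨n, hn0, hne⟩ := hw T V (hVopen.mem_nhds (hT T le_rfl))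
  refine ⟨n, hn0, hne.mono ?_⟩
  exact Set.inter_subset_inter (Set.image_mono hVU) hVU

/-- cycles of arbitrarily small scale at a nonwandering point. -/
lemma nwCycle (f : X → X)
    (hUC : ∀ α : ℝ, 0 < α → ∃ γ, 0 < γ ∧ ∀ p q : X, dist p q ≤ γ → dist (f p) (f q) ≤ α)
    {a : X} (ha : a ∈ NonWandering f) {η : ℝ} (hη : 0 < η) :
    ∃ (c : ℕ → X) (m : ℕ), 1 ≤ m ∧ c 0 = a ∧ c m = a ∧ FChain f η c m := by
  obtain ⟨γ, hγ0, hγ⟩ := hUC (η/2) (by positivity)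
  set γ' := min γ (η/2) with hγ'def
  have hγ'0 : 0 < γ' := lt_min hγ0 (by positivity)
  obtain ⟨n, hn0, hne⟩ := ha _ (Metric.ball_mem_nhds a hγ'0)
  obtain ⟨w, ⟨u, huU, hwu⟩, hwb⟩ := hne
  have huU' : dist u a ≤ γ' := le_of_lt (Metric.mem_ball.mp huU)
  have hwb' : dist (f^[n] u) a ≤ γ' := by rw [hwu]; exact le_of_lt (Metric.mem_ball.mp hwb)
  refine ⟨fun i => if i = 0 ∨ n ≤ i then a else f^[i] u, n, hn0, by simp, by simp [hn0], ?_⟩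
  intro i hi
  beta_reduce
  by_cases h0 : i = 0
  · subst h0
    simp only [true_or, if_pos]
    by_cases hn1 : n ≤ 1
    · have hn1' : n = 1 := by omega
      have e1 : (if 1 = 0 ∨ n ≤ 1 then a else f^[1] u) = a := by simp [hn1]
      rw [e1]
      have e2 : dist (f a) (f u) ≤ η/2 := hγ _ _ (by rw [dist_comm]; exact le_trans huU' (min_le_left _ _))
      have e3 : dist (f u) a ≤ η/2 := by
        have := hwb'
        rw [hn1'] at this
        simpa using le_trans this (min_le_right _ _)
      calc dist (f a) a ≤ dist (f a) (f u) + dist (f u) a := dist_triangle _ _ _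
        _ ≤ η/2 + η/2 := add_le_add e2 e3
        _ = η := by ring
    · have e1 : (if 1 = 0 ∨ n ≤ 1 then a else f^[1] u) = f^[1] u := by simp [hn1]
      rw [e1, Function.iterate_one]
      have e2 : dist (f a) (f u) ≤ η/2 := hγ _ _ (by rw [dist_comm]; exact le_trans huU' (min_le_left _ _))
      linarith
  · have e1 : (if i = 0 ∨ n ≤ i then a else f^[i] u) = f^[i] u := by
      have h3 : ¬ n ≤ i := by omega
      simp [h0, h3]
    rw [e1]
    by_cases h2 : i + 1 = n
    · have e2 : (if i+1 = 0 ∨ n ≤ i+1 then a else f^[i+1] u) = a := by simp [h2]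
      rw [e2]
      have e3 : f (f^[i] u) = f^[n] u := by
        rw [← h2, Function.iterate_succ_apply']
      rw [e3]
      exact le_trans (le_trans hwb' (min_le_right _ _)) (by linarith)
    · have e2 : (if i+1 = 0 ∨ n ≤ i+1 then a else f^[i+1] u) = f^[i+1] u := by
        have h3 : ¬ n ≤ i + 1 := by omega
        simp [h3]
      rw [e2, ← Function.iterate_succ_apply' f i u, dist_self]
      positivity

end Machine2

section Chains
variable {X : Type*} [MetricSpace X]

/-- reverse a single pseudo-orbit step at a nonwandering point. -/
lemma revStep (f : X → X)
    (hUC : ∀ α : ℝ, 0 < α → ∃ γ, 0 < γ ∧ ∀ p q : X, dist p q ≤ γ → dist (f p) (f q) ≤ α)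
    {a bb : X} (ha : a ∈ NonWandering f) {δ δ' : ℝ} (hδ : 0 < δ) (hδ' : 0 < δ')
    (hstep : dist (f a) bb ≤ δ)
    (hmod : ∀ p q : X, dist p q ≤ 2*δ → dist (f p) (f q) ≤ δ'/2)
    (hδle : δ ≤ δ'/2) :
    ∃ (c : ℕ → X) (m : ℕ), 1 ≤ m ∧ c 0 = bb ∧ c m = a ∧ FChain f δ' c m := by
  obtain ⟨c', m', hm', h0, hm'a, hch⟩ := nwCycle f hUC ha hδ
  by_cases h1 : m' = 1
  · refine ⟨fun i => if i = 0 then bb else a, 1, le_refl _, by simp, by simp, ?_⟩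
    intro i hi
    have hi0 : i = 0 := by omega
    subst hi0
    beta_reduce
    simp only [if_pos rfl, if_neg (by omega : ¬ (0:ℕ) + 1 = 0)]
    have hfa : dist (f a) a ≤ δ := by
      have h5 := hch 0 (by omega)
      rw [h0] at h5
      rw [show (0:ℕ)+1 = m' by omega, hm'a] at h5
      exact h5
    have hba : dist bb a ≤ 2*δ := by
      calc dist bb a ≤ dist bb (f a) + dist (f a) a := dist_triangle _ _ _
        _ ≤ δ + δ := add_le_add (by rw [dist_comm]; exact hstep) hfa
        _ = 2*δ := by ring
    calc dist (f bb) a ≤ dist (f bb) (f a) + dist (f a) a := dist_triangle _ _ _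
      _ ≤ δ'/2 + δ := add_le_add (hmod _ _ hba) hfa
      _ ≤ δ' := by linarith
  · have hm2 : 2 ≤ m' := by omega
    refine ⟨fun i => if i = 0 then bb else c' (i+1), m' - 1, by omega, by simp, ?_, ?_⟩
    · have : ¬ (m' - 1 = 0) := by omega
      simp only [this, if_false]
      have h4 : m' - 1 + 1 = m' := by omega
      rw [h4, hm'a]
    · intro i hi
      beta_reduce
      by_cases h0' : i = 0
      · subst h0'
        simp only [if_pos rfl, if_neg (by omega : ¬ (0:ℕ) + 1 = 0)]
        have hb1 : dist bb (c' 1) ≤ 2*δ := by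
          have hc01 : dist (f a) (c' 1) ≤ δ := by
            have := hch 0 (by omega)
            rw [h0] at this
            exact this
          calc dist bb (c' 1) ≤ dist bb (f a) + dist (f a) (c' 1) := dist_triangle _ _ _
            _ ≤ δ + δ := add_le_add (by rw [dist_comm]; exact hstep) hc01
            _ = 2*δ := by ring
        calc dist (f bb) (c' (0+1+1)) ≤ dist (f bb) (f (c' 1)) + dist (f (c' 1)) (c' 2) :=
              dist_triangle _ _ _
          _ ≤ δ'/2 + δ := add_le_add (hmod _ _ hb1) (hch 1 (by omega))
          _ ≤ δ' := by linarith
      · simp only [h0', if_false, if_neg (by omega : ¬ i + 1 = 0)]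
        exact le_trans (hch (i+1) (by omega)) (by linarith)

/-- reverse chain along a finite pseudo-orbit of nonwandering points. -/
lemma revChain (f : X → X)
    (hUC : ∀ α : ℝ, 0 < α → ∃ γ, 0 < γ ∧ ∀ p q : X, dist p q ≤ γ → dist (f p) (f q) ≤ α)
    (x : ℕ → X) (hx : ∀ i, x i ∈ NonWandering f)
    {δ δ' : ℝ} (hδ : 0 < δ) (hδ' : 0 < δ')
    (hps : ∀ i, dist (f (x i)) (x (i+1)) ≤ δ)
    (hmod : ∀ p q : X, dist p q ≤ 2*δ → dist (f p) (f q) ≤ δ'/2)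
    (hδle : δ ≤ δ'/2) :
    ∀ n, ∃ (c : ℕ → X) (m : ℕ), 1 ≤ m ∧ c 0 = x n ∧ c m = x 0 ∧ FChain f δ' c m := by
  intro n
  induction n with
  | zero => exact nwCycle f hUC (hx 0) hδ'
  | succ n ih =>
      obtain ⟨c₂, m₂, hm₂, h₂0, h₂m, h₂ch⟩ := ih
      obtain ⟨c₁, m₁, hm₁, h₁0, h₁m, h₁ch⟩ :=
        revStep f hUC (hx n) hδ hδ' (hps n) hmod hδle
      refine ⟨capp c₁ m₁ c₂, m₁ + m₂, by omega, ?_, ?_, ?_⟩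
      · rw [capp_lt (by omega)]; exact h₁0
      · rw [capp_ge (by omega)]
        have : m₁ + m₂ - m₁ = m₂ := by omega
        rw [this]; exact h₂m
      · exact fchain_capp h₁ch h₂ch (by rw [h₂0, h₁m])

/-- a periodic extension of a cyclic chain is a pseudo-orbit. -/
lemma periodic_pseudo {f : X → X} {θ : ℝ} {C : ℕ → X} {L : ℕ} (hL : 1 ≤ L)
    (hCL : C L = C 0) (hch : FChain f θ C L) :
    IsPseudoOrbit f θ (fun i => C (i % L)) := by
  intro i
  have hmod : i % L < L := Nat.mod_lt _ (by omega)
  have hsucc : (i+1) % L = (i % L + 1) % L := by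
    conv_lhs => rw [← Nat.mod_add_mod]
  by_cases h : i % L + 1 < L
  · have : (i+1) % L = i % L + 1 := by rw [hsucc]; exact Nat.mod_eq_of_lt h
    beta_reduce
    rw [this]
    exact hch _ hmod
  · have hLe : i % L + 1 = L := by omega
    have : (i+1) % L = 0 := by rw [hsucc, hLe, Nat.mod_self]
    beta_reduce
    rw [this, ← hCL]
    have h5 := hch (i % L) hmod
    rwa [hLe] at h5

end Chains



section Step1
variable {X : Type*} [MetricSpace X]

lemma periodicShadow [CompactSpace X] (f : X → X) (hf : Continuous f)
    (h : HasLimitShadowing f) :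
    ∀ ε > 0, ∃ δ > 0, ∀ (P : ℕ → X) (L : ℕ), 1 ≤ L → (∀ i, P (i + L) = P i) →
      IsPseudoOrbit f δ P → ∃ v : X, Shadows f ε P v := by
  have hUC : ∀ α : ℝ, 0 < α → ∃ γ, 0 < γ ∧ ∀ p q : X, dist p q ≤ γ → dist (f p) (f q) ≤ α := by
    intro α hα
    obtain ⟨γ, hγ0, hγ⟩ := Metric.uniformContinuous_iff.mp
      (CompactSpace.uniformContinuous_of_continuous hf) α hα
    exact ⟨γ/2, by positivity, fun p q hpq => le_of_lt (hγ (lt_of_le_of_lt hpq (by linarith)))⟩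
  intro ε hε
  by_contra hcon
  push_neg at hcon
  have hex : ∀ m : ℕ, ∃ (P : ℕ → X) (L : ℕ), 1 ≤ L ∧ (∀ i, P (i + L) = P i) ∧
      IsPseudoOrbit f (1/(m+1)) P ∧ ∀ v : X, ∃ i, ε < dist (P i) (f^[i] v) := by
    intro m
    obtain ⟨P, L, h1, h2, h3, h4⟩ := hcon (1/(m+1)) (odp m)
    refine ⟨P, L, h1, h2, h3, fun v => ?_⟩
    have := h4 v
    simp only [Shadows, not_forall, not_le] at this
    exact this
  choose P L hL hper hps hbad using hex
  have permul : ∀ q r i, P q (i + r * L q) = P q i := by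
    intro q r
    induction r with
    | zero => intro i; simp
    | succ r ih =>
        intro i
        have he : i + (r+1) * L q = (i + r * L q) + L q := by ring
        rw [he, hper q, ih]
  -- finite badness witness
  have hfin : ∀ m, ∃ R, ∀ v : X, ∃ i ≤ R, ε < dist (P m i) (f^[i] v) := by
    intro m
    by_contra hc
    push_neg at hc
    choose vv hvv using hc
    obtain ⟨v, -, φ, hφ, hlim⟩ := isCompact_univ.tendsto_subseq (fun n => Set.mem_univ (vv n))
    have hsh : ∀ i, dist (P m i) (f^[i] v) ≤ ε := by
      intro i
      have htd : Tendsto (fun t => f^[i] (vv (φ t))) atTop (𝓝 (f^[i] v)) :=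
        ((hf.iterate i).tendsto v).comp hlim
      apply le_of_tendsto (tendsto_const_nhds.dist htd)
      refine eventually_atTop.mpr ⟨i, fun t ht => ?_⟩
      exact hvv (φ t) i (le_trans ht hφ.le_apply)
    obtain ⟨i, hi⟩ := hbad m v
    exact absurd (hsh i) (not_le.mpr hi)
  choose R hR using hfin
  -- cluster point of base points
  obtain ⟨b, -, φ, hφ, hblim⟩ := isCompact_univ.tendsto_subseq
    (x := fun m => P m 0) (fun m => Set.mem_univ _)
  -- moduli
  choose γf hγf0 hγf using fun k : ℕ => hUC (1/(k+1)) (odp k)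
  -- selection of stage indices
  have hψex : ∀ k : ℕ, ∃ q : ℕ, k ≤ q ∧ dist (P q 0) b ≤ γf k ∧ dist (P q 0) b ≤ 1/(k+2) := by
    intro k
    have hpos : (0:ℝ) < min (γf k) (1/(k+2)) := lt_min (hγf0 k) (by positivity)
    obtain ⟨T, hT⟩ := Metric.tendsto_atTop.mp hblim _ hpos
    have hd := hT (max T k) (le_max_left _ _)
    refine ⟨φ (max T k), le_trans (le_max_right T k) hφ.le_apply, ?_, ?_⟩
    · exact le_of_lt (lt_of_lt_of_le hd (min_le_left _ _))
    · exact le_of_lt (lt_of_lt_of_le hd (min_le_right _ _))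
  choose ψ hψge hψγ hψcl using hψex
  -- cycles at b of arbitrarily small scale
  have hcyc : ∀ η : ℝ, 0 < η →
      ∃ (c : ℕ → X) (m : ℕ), 1 ≤ m ∧ c 0 = b ∧ c m = b ∧ FChain f η c m := by
    intro η hη
    obtain ⟨γ, hγ0, hγ⟩ := hUC (η/3) (by positivity)
    obtain ⟨N, hN⟩ := exists_nat_one_div_lt (show (0:ℝ) < η/3 by positivity)
    obtain ⟨T, hT⟩ := Metric.tendsto_atTop.mp hblim (min γ (η/3)) (lt_min hγ0 (by positivity))
    set q := φ (max T N) with hqdef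
    have hd : dist (P q 0) b < min γ (η/3) := hT _ (le_max_left _ _)
    have hdγ : dist (P q 0) b ≤ γ := le_of_lt (lt_of_lt_of_le hd (min_le_left _ _))
    have hdη : dist (P q 0) b ≤ η/3 := le_of_lt (lt_of_lt_of_le hd (min_le_right _ _))
    have hscale : (1:ℝ)/(q+1) ≤ η/3 := by
      have h1 : N ≤ q := le_trans (le_max_right T N) hφ.le_apply
      exact le_trans (odm h1) (le_of_lt hN)
    have e1 : dist (f b) (f (P q 0)) ≤ η/3 := hγ _ _ (by rw [dist_comm]; exact hdγ)
    have e2 : dist (f (P q 0)) (P q 1) ≤ η/3 := le_trans (hps q 0) hscale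
    refine ⟨fun i => if i = 0 ∨ L q ≤ i then b else P q i, L q, hL q, by simp, by simp, ?_⟩
    intro i hi
    beta_reduce
    by_cases h0 : i = 0
    · subst h0
      rw [if_pos (Or.inl rfl)]
      by_cases hL1 : L q ≤ 1
      · rw [if_pos (Or.inr hL1)]
        have e3 : P q 1 = P q 0 := by
          have h5 := hper q 0
          rwa [show 0 + L q = 1 by omega] at h5
        calc dist (f b) b ≤ dist (f b) (P q 1) + dist (P q 1) b := dist_triangle _ _ _
          _ ≤ (dist (f b) (f (P q 0)) + dist (f (P q 0)) (P q 1)) + dist (P q 1) b :=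
              add_le_add (dist_triangle _ _ _) le_rfl
          _ ≤ (η/3 + η/3) + η/3 := by
              refine add_le_add (add_le_add e1 e2) ?_
              rw [e3]; exact hdη
          _ = η := by ring
      · rw [if_neg (by omega : ¬ ((1:ℕ) = 0 ∨ L q ≤ 1))]
        calc dist (f b) (P q 1) ≤ dist (f b) (f (P q 0)) + dist (f (P q 0)) (P q 1) :=
              dist_triangle _ _ _
          _ ≤ η/3 + η/3 := add_le_add e1 e2
          _ ≤ η := by linarith
    · rw [if_neg (by omega : ¬ (i = 0 ∨ L q ≤ i))]
      by_cases hiL : i + 1 = L q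
      · rw [if_pos (Or.inr (by omega))]
        have e3 : P q (i+1) = P q 0 := by
          have h5 := hper q 0
          rwa [show 0 + L q = i + 1 by omega] at h5
        calc dist (f (P q i)) b ≤ dist (f (P q i)) (P q (i+1)) + dist (P q (i+1)) b :=
              dist_triangle _ _ _
          _ ≤ η/3 + η/3 := by
              refine add_le_add (le_trans (hps q i) hscale) ?_
              rw [e3]; exact hdη
          _ ≤ η := by linarith
      · rw [if_neg (by omega : ¬ (i + 1 = 0 ∨ L q ≤ i + 1))]
        exact le_trans (le_trans (hps q i) hscale) (by linarith)
  -- stage construction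
  have hstage : ∀ k : ℕ, ∃ (s : ℕ → X) (len : ℕ), 1 ≤ len ∧
      FChain f (3*(1/(k+1))) s len ∧ s 0 = P (ψ k) 0 ∧
      (∀ j ≤ R (ψ k), s j = P (ψ k) j) ∧ s len = b ∧ R (ψ k) < len := by
    intro k
    obtain ⟨cc, m, hm, hcc0, hccm, hccch⟩ := hcyc (1/(k+1)) (odp k)
    set Bk := (R (ψ k) + 1) * L (ψ k) with hBkdef
    have hBk1 : R (ψ k) + 1 ≤ Bk := Nat.le_mul_of_pos_right _ (by have := hL (ψ k); omega)
    have hPkB : P (ψ k) Bk = P (ψ k) 0 := by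
      have := permul (ψ k) (R (ψ k) + 1) 0
      rwa [zero_add] at this
    have hPkch : FChain f (3*(1/(k+1))) (P (ψ k)) Bk := by
      intro i _
      refine le_trans (hps (ψ k) i) (le_trans (odm (hψge k)) ?_)
      have := odp k; linarith
    have hc'ch : FChain f (3*(1/(k+1)))
        (fun i => if i = 0 then P (ψ k) Bk else cc i) m := by
      intro i hi
      beta_reduce
      by_cases h0 : i = 0
      · subst h0
        rw [if_pos rfl, if_neg (by omega : ¬ (0:ℕ) + 1 = 0)]
        have e1 : dist (f (P (ψ k) Bk)) (f b) ≤ 1/(k+1) := by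
          apply hγf k
          rw [hPkB]
          exact hψγ k
        have e2 : dist (f b) (cc 1) ≤ 1/(k+1) := by
          have h5 := hccch 0 (by omega)
          rwa [hcc0] at h5
        calc dist (f (P (ψ k) Bk)) (cc (0+1)) ≤ dist (f (P (ψ k) Bk)) (f b) + dist (f b) (cc 1) :=
              dist_triangle _ _ _
          _ ≤ 1/(k+1) + 1/(k+1) := add_le_add e1 e2
          _ ≤ 3*(1/(k+1)) := by have := odp k; linarith
      · rw [if_neg h0, if_neg (by omega : ¬ i + 1 = 0)]
        refine le_trans (hccch i hi) ?_
        have := odp k; linarith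
    refine ⟨capp (P (ψ k)) Bk (fun i => if i = 0 then P (ψ k) Bk else cc i), Bk + m,
      by omega, ?_, ?_, ?_, ?_, by omega⟩
    · exact fchain_capp hPkch hc'ch (by simp)
    · rw [capp_lt (by omega)]
    · intro j hj
      rw [capp_lt (by omega)]
    · rw [capp_ge (Nat.le_add_right _ _)]
      have e1 : Bk + m - Bk = m := by omega
      rw [e1]
      beta_reduce
      rw [if_neg (by omega : ¬ m = 0)]
      exact hccm
  choose s len hlen1 hch hs0 hsR hsb hRlen using hstage
  -- apply the machine
  have hϑ : Tendsto (fun k : ℕ => 4*(1/(k+1)) : ℕ → ℝ) atTop (𝓝 0) := by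
    have h5 := tendsto_one_div_add_atTop_nhds_zero_nat.const_mul (4:ℝ)
    simpa using h5
  have H1 : ∀ k j, j + 1 < len k → dist (f (s k j)) (s k (j + 1)) ≤ 4*(1/(k+1)) := by
    intro k j hj
    refine le_trans (hch k j (by omega)) ?_
    have := odp k; linarith
  have H2 : ∀ k, dist (f (s k (len k - 1))) (s (k + 1) 0) ≤ 4*(1/(k+1)) := by
    intro k
    have e1 : dist (f (s k (len k - 1))) (s k (len k)) ≤ 3*(1/(k+1)) := by
      have h5 := hch k (len k - 1) (by have := hlen1 k; omega)
      rwa [show len k - 1 + 1 = len k by have := hlen1 k; omega] at h5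
    have e2 : dist (s k (len k)) (s (k+1) 0) ≤ 1/(k+1) := by
      rw [hsb k, hs0 (k+1), dist_comm]
      refine le_trans (hψcl (k+1)) ?_
      apply one_div_le_one_div_of_le (by positivity)
      push_cast; linarith
    calc dist (f (s k (len k - 1))) (s (k+1) 0)
        ≤ dist (f (s k (len k - 1))) (s k (len k)) + dist (s k (len k)) (s (k+1) 0) :=
          dist_triangle _ _ _
      _ ≤ 3*(1/(k+1)) + 1/(k+1) := add_le_add e1 e2
      _ = 4*(1/(k+1)) := by ring
  obtain ⟨y, hy⟩ := machine f h s len _ hlen1 hϑ H1 H2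
  obtain ⟨K, hK⟩ := hy ε hε
  obtain ⟨i, hiR, hibad⟩ := hR (ψ K) (f^[tpos len K] y)
  have h1 : dist (s K i) (f^[tpos len K + i] y) ≤ ε :=
    hK K le_rfl i (lt_of_le_of_lt hiR (hRlen K))
  rw [hsR K i hiR] at h1
  rw [Nat.add_comm, Function.iterate_add_apply] at h1
  exact absurd h1 (not_le.mpr hibad)

end Step1

end LSaux

/-- limit shadowing implies shadowing for the restriction to Ω(f). -/
theorem limit_shadowing_implies_shadowing_on_nonwandering
    [CompactSpace X] (f : X → X) (hf : Continuous f)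
    (h : HasLimitShadowing f) :
    ∀ ε > 0, ∃ δ > 0, ∀ x : ℕ → X, (∀ i, x i ∈ NonWandering f) →
      IsPseudoOrbit f δ x → ∃ y ∈ NonWandering f, Shadows f ε x y := by
  have hUC : ∀ α : ℝ, 0 < α → ∃ γ, 0 < γ ∧ ∀ p q : X, dist p q ≤ γ → dist (f p) (f q) ≤ α := by
    intro α hα
    obtain ⟨γ, hγ0, hγ⟩ := Metric.uniformContinuous_iff.mp
      (CompactSpace.uniformContinuous_of_continuous hf) α hα
    exact ⟨γ/2, by positivity, fun p q hpq => le_of_lt (hγ (lt_of_le_of_lt hpq (by linarith)))⟩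
  intro ε hε
  obtain ⟨δ', hδ'0, hδ'⟩ := LSaux.periodicShadow f hf h (ε/2) (by positivity)
  obtain ⟨γ, hγ0, hγ⟩ := hUC (δ'/2) (by positivity)
  refine ⟨min (δ'/2) (γ/2), lt_min (by positivity) (by positivity), ?_⟩
  intro x hxΩ hxps
  set δ := min (δ'/2) (γ/2) with hδdef
  have hδ0 : 0 < δ := lt_min (by positivity) (by positivity)
  have hδle : δ ≤ δ'/2 := min_le_left _ _
  have hδγ : δ ≤ γ/2 := min_le_right _ _
  have hmod : ∀ p q : X, dist p q ≤ 2*δ → dist (f p) (f q) ≤ δ'/2 := by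
    intro p q hpq
    exact hγ p q (by linarith)
  have key : ∀ n : ℕ, ∃ w, w ∈ NonWandering f ∧ ∀ i ≤ n, dist (x i) (f^[i] w) ≤ ε/2 := by
    intro n
    obtain ⟨rc, m, hm, hrc0, hrcm, hrcch⟩ :=
      LSaux.revChain f hUC x hxΩ hδ0 hδ'0 hxps hmod hδle n
    set C := LSaux.capp x n rc with hCdef
    set L := n + m with hLdef
    have hCi : ∀ i ≤ n, C i = x i := by
      intro i hi
      rw [hCdef]
      rcases Nat.lt_or_ge i n with h5 | h5
      · exact LSaux.capp_lt h5
      · have h6 : i = n := by omega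
        subst h6
        rw [LSaux.capp_ge le_rfl, Nat.sub_self, hrc0]
    have hC0 : C 0 = x 0 := hCi 0 (by omega)
    have hCL : C L = x 0 := by
      rw [hCdef, LSaux.capp_ge (by omega : n ≤ L)]
      rw [show L - n = m by omega]
      exact hrcm
    have hxch : LSaux.FChain f δ' x n := by
      intro i _
      refine le_trans (hxps i) ?_
      have : (0:ℝ) < δ' := hδ'0
      linarith
    have hCch : LSaux.FChain f δ' C L := LSaux.fchain_capp hxch hrcch (by rw [hrc0])
    have hPC : IsPseudoOrbit f δ' (fun i => C (i % L)) :=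
      LSaux.periodic_pseudo (by omega) (by rw [hCL, hC0]) hCch
    obtain ⟨v, hv⟩ := hδ' (fun i => C (i % L)) L (by omega)
      (fun i => by show C ((i + L) % L) = C (i % L); rw [Nat.add_mod_right]) hPC
    obtain ⟨w, -, φ, hφ, hwlim⟩ := isCompact_univ.tendsto_subseq
      (x := fun t => f^[(t+1) * L] v) (fun t => Set.mem_univ _)
    have hLpos : 0 < L := by omega
    have hmono : StrictMono (fun t => (φ t + 1) * L) := by
      intro a b hab
      have h5 := hφ hab
      exact (Nat.mul_lt_mul_right hLpos).mpr (by omega)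
    have hwnw : w ∈ NonWandering f := LSaux.nwOfReturn f hmono hwlim
    refine ⟨w, hwnw, ?_⟩
    intro i hin
    have hknow : ∀ t, dist (x i) (f^[i + (φ t + 1) * L] v) ≤ ε/2 := by
      intro t
      have h5 : dist (C ((i + (φ t + 1) * L) % L)) (f^[i + (φ t + 1) * L] v) ≤ ε/2 := hv _
      have h6 : (i + (φ t + 1) * L) % L = i := by
        rw [Nat.add_mul_mod_self_right]
        exact Nat.mod_eq_of_lt (by omega)
      rw [h6, hCi i hin] at h5
      exact h5
    have htd : Tendsto (fun t => f^[i + (φ t + 1) * L] v) atTop (𝓝 (f^[i] w)) := by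
      have he : ∀ t : ℕ, f^[i + (φ t + 1) * L] v = f^[i] (f^[(φ t + 1) * L] v) := fun t =>
        Function.iterate_add_apply f i _ v
      simp only [he]
      exact ((hf.iterate i).tendsto w).comp hwlim
    exact le_of_tendsto (tendsto_const_nhds.dist htd) (Eventually.of_forall hknow)
  choose w hwnw hwsh using key
  obtain ⟨y, -, ρ, hρ, hylim⟩ := isCompact_univ.tendsto_subseq (x := w) (fun n => Set.mem_univ _)
  refine ⟨y, LSaux.nwOfLimit f (w := w ∘ ρ) (fun n => hwnw (ρ n)) hylim, ?_⟩
  intro i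
  have htd : Tendsto (fun t => f^[i] (w (ρ t))) atTop (𝓝 (f^[i] y)) :=
    ((hf.iterate i).tendsto y).comp hylim
  have hev : ∀ t, i ≤ t → dist (x i) (f^[i] (w (ρ t))) ≤ ε/2 := fun t ht =>
    hwsh (ρ t) i (le_trans ht hρ.le_apply)
  have h5 := le_of_tendsto (tendsto_const_nhds.dist htd) (eventually_atTop.mpr ⟨i, hev⟩)
  linarith
end

section
/- If a continuous self-map f of a compact metric space has the limit shadowing property, then the chain recurrent set equals the non-wandering set, and both equal the closure of the set of minimal points: CR(f) = Ω(f) = closure(M(f)). -/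
open Filter Topology

variable {X : Type*} [MetricSpace X]

lemma isClosed_nonWandering (f : X → X) : IsClosed (NonWandering f) := by
  rw [← closure_subset_iff_isClosed]
  intro x hx U hU
  obtain ⟨x', hx'U, hx'⟩ := mem_closure_iff_nhds.1 hx (interior U) (interior_mem_nhds.2 hU)
  obtain ⟨n, hn, w, hw1, hw2⟩ := hx' (interior U) (isOpen_interior.mem_nhds hx'U)
  exact ⟨n, hn, w, Set.image_mono interior_subset hw1, interior_subset hw2⟩

lemma minimalPoints_subset_nonWandering (f : X → X) (hf : Continuous f) :
    MinimalPoints f ⊆ NonWandering f := by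
  intro m hm U hU
  have hKsub : closure (Set.range fun n => f^[n+1] m) ⊆ orbitClosure f m := by
    apply closure_mono
    rintro _ ⟨n, rfl⟩
    exact ⟨n+1, rfl⟩
  have hKne : (closure (Set.range fun n => f^[n+1] m)).Nonempty :=
    ⟨f^[1] m, subset_closure ⟨0, rfl⟩⟩
  have hKinv : Set.MapsTo f (closure (Set.range fun n => f^[n+1] m))
      (closure (Set.range fun n => f^[n+1] m)) := by
    intro z hz
    have h1 : f z ∈ closure (f '' Set.range fun n => f^[n+1] m) :=
      image_closure_subset_closure_image hf ⟨z, hz, rfl⟩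
    refine closure_mono ?_ h1
    rintro _ ⟨_, ⟨n, rfl⟩, rfl⟩
    exact ⟨n+1, by rw [← Function.iterate_succ_apply' f (n+1) m]⟩
  have hK := hm _ hKsub hKne isClosed_closure hKinv
  have hmK : m ∈ closure (Set.range fun n => f^[n+1] m) := by
    rw [hK]; exact subset_closure ⟨0, rfl⟩
  obtain ⟨_, hnU, n, rfl⟩ := mem_closure_iff_nhds.1 hmK U hU
  exact ⟨n+1, Nat.succ_pos n, f^[n+1] m, ⟨m, mem_of_mem_nhds hU, rfl⟩, hnU⟩

lemma nonWandering_subset_chainRecurrent (f : X → X) (hf : Continuous f) :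
    NonWandering f ⊆ ChainRecurrent f := by
  intro x hx δ hδ
  obtain ⟨η, hη, hηf⟩ := Metric.continuous_iff.1 hf x (δ/2) (by linarith)
  set r := min η (δ/2) with hr
  have hrpos : 0 < r := lt_min hη (by linarith)
  obtain ⟨n, hn, w, ⟨z, hzU, rfl⟩, hwU⟩ := hx (Metric.ball x r) (Metric.ball_mem_nhds x hrpos)
  refine ⟨n, hn, fun i => if i = 0 then x else if n ≤ i then x else f^[i] z, by simp, by
    simp [Nat.one_le_iff_ne_zero.1 hn, le_refl], fun i _ => Set.mem_univ _, ?_⟩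
  intro i hi
  have hz1 : dist (f z) (f x) < δ/2 := hηf z (lt_of_lt_of_le (Metric.mem_ball.1 hzU) (min_le_left _ _))
  have hz2 : dist (f^[n] z) x < δ/2 :=
    lt_of_lt_of_le (Metric.mem_ball.1 hwU) (min_le_right _ _)
  rcases Nat.eq_zero_or_pos i with rfl | hipos
  · simp only [if_pos rfl]
    rcases eq_or_lt_of_le (Nat.one_le_iff_ne_zero.2 (Nat.pos_iff_ne_zero.1 hn)) with h1 | h1
    · -- n = 1
      have : (1:ℕ) ≠ 0 := one_ne_zero
      simp only [this, if_false, ← h1, if_pos le_rfl]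
      calc dist (f x) x ≤ dist (f x) (f z) + dist (f z) x := dist_triangle _ _ _
        _ ≤ δ/2 + δ/2 := by
            rw [dist_comm (f x) (f z)]
            have : dist (f z) x < δ/2 := by
              have := hz2; rwa [← h1] at this
            exact add_le_add hz1.le this.le
        _ = δ := by ring
    · have h2 : ¬ (n ≤ 1) := by omega
      simp only [one_ne_zero, if_false, h2, if_false, Function.iterate_one]
      rw [dist_comm]
      exact le_trans hz1.le (by linarith)
  · have hine : i ≠ 0 := Nat.pos_iff_ne_zero.1 hipos
    have hni : ¬ (n ≤ i) := not_le.2 hi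
    simp only [hine, if_false, hni, if_false]
    rcases eq_or_lt_of_le (Nat.succ_le_of_lt hi) with h1 | h1
    · have : n ≤ i + 1 := by omega
      simp only [Nat.succ_ne_zero, if_neg (Nat.succ_ne_zero i), if_pos this]
      rw [← Function.iterate_succ_apply' f i z, h1]
      exact hz2.le.trans (by linarith)
    · have h2 : ¬ (n ≤ i + 1) := by omega
      rw [if_neg (Nat.succ_ne_zero i), if_neg h2, ← Function.iterate_succ_apply' f i z,
        dist_self]
      linarith

lemma exists_minimal_subset [CompactSpace X] (g : X → X)
    (Z : Set X) (hZc : IsClosed Z) (hZne : Z.Nonempty) (hZi : Set.MapsTo g Z Z) :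
    ∃ M ⊆ Z, M.Nonempty ∧ IsClosed M ∧ Set.MapsTo g M M ∧
      ∀ K ⊆ M, K.Nonempty → IsClosed K → Set.MapsTo g K K → K = M := by
  set S : Set (Set X) := {K | K ⊆ Z ∧ K.Nonempty ∧ IsClosed K ∧ Set.MapsTo g K K} with hS
  have H : ∀ c ⊆ S, IsChain (· ⊆ ·) c → c.Nonempty → ∃ lb ∈ S, ∀ s ∈ c, lb ⊆ s := by
    intro c hcS hchain hcne
    refine ⟨⋂₀ c, ⟨?_, ?_, ?_, ?_⟩, fun s hs => Set.sInter_subset_of_mem hs⟩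
    · exact (Set.sInter_subset_of_mem hcne.choose_spec).trans (hcS hcne.choose_spec).1
    · have : Nonempty c := hcne.to_subtype
      rw [Set.sInter_eq_iInter]
      apply IsCompact.nonempty_iInter_of_directed_nonempty_isCompact_isClosed
      · exact DirectedOn.directed_val (IsChain.directedOn hchain.symm)
      · exact fun K => (hcS K.2).2.1
      · exact fun K => (hcS K.2).2.2.1.isCompact
      · exact fun K => (hcS K.2).2.2.1
    · exact isClosed_sInter fun K hK => (hcS hK).2.2.1
    · intro z hz
      rw [Set.mem_sInter] at hz ⊢
      exact fun K hK => (hcS hK).2.2.2 (hz K hK)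
  obtain ⟨M, hMZ, hMmin⟩ := zorn_superset_nonempty S H Z ⟨le_refl _, hZne, hZc, hZi⟩
  obtain ⟨hMS, hMm⟩ := hMmin
  refine ⟨M, hMS.1, hMS.2.1, hMS.2.2.1, hMS.2.2.2, fun K hKM hKne hKc hKi => ?_⟩
  exact le_antisymm hKM (hMm ⟨hKM.trans hMS.1, hKne, hKc, hKi⟩ hKM)

lemma isMinimalPoint_of_iterate [CompactSpace X] (f : X → X) (hf : Continuous f)
    {L : ℕ} (hL : 1 ≤ L) (M₀ : Set X) (hMne : M₀.Nonempty) (hMc : IsClosed M₀)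
    (hMi : Set.MapsTo f^[L] M₀ M₀)
    (hmin : ∀ K ⊆ M₀, K.Nonempty → IsClosed K → Set.MapsTo f^[L] K K → K = M₀)
    (m : X) (hm : m ∈ M₀) : IsMinimalPoint f m := by
  set Q : Set X := closure (Set.range fun n => (f^[L])^[n] m) with hQdef
  have hQM : Q ⊆ M₀ := by
    apply closure_minimal _ hMc
    rintro _ ⟨n, rfl⟩
    exact hMi.iterate n hm
  have hmQ : m ∈ Q := subset_closure ⟨0, rfl⟩
  have hQinv : Set.MapsTo f^[L] Q Q := by
    intro z hz
    have h1 : f^[L] z ∈ closure (f^[L] '' Set.range fun n => (f^[L])^[n] m) :=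
      image_closure_subset_closure_image (hf.iterate L) ⟨z, hz, rfl⟩
    refine closure_mono ?_ h1
    rintro _ ⟨_, ⟨n, rfl⟩, rfl⟩
    exact ⟨n+1, Function.iterate_succ_apply' (f^[L]) n m⟩
  have hQM₀ : Q = M₀ := hmin Q hQM ⟨m, hmQ⟩ isClosed_closure hQinv
  have hQcompact : IsCompact Q := isClosed_closure.isCompact
  set NU : Set X := ⋃ r ∈ Finset.range L, f^[r] '' Q with hNUdef
  have hNUc : IsClosed NU := by
    apply Set.Finite.isClosed_biUnion (Finset.finite_toSet _)
    exact fun r _ => (hQcompact.image (hf.iterate r)).isClosed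
  have horb : orbitClosure f m = NU := by
    apply le_antisymm
    · apply closure_minimal _ hNUc
      rintro _ ⟨n, rfl⟩
      have hmod : n % L + L * (n / L) = n := Nat.mod_add_div n L
      have heq : f^[n] m = f^[n % L] ((f^[L])^[n / L] m) := by
        rw [← Function.iterate_mul, ← Function.iterate_add_apply, hmod]
      show f^[n] m ∈ NU
      rw [heq]
      exact Set.mem_biUnion (Finset.mem_range.2 (Nat.mod_lt n hL))
        ⟨(f^[L])^[n / L] m, subset_closure ⟨n / L, rfl⟩, rfl⟩
    · refine Set.iUnion₂_subset fun r hr => ?_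
      rintro _ ⟨p, hp, rfl⟩
      have h1 : f^[r] p ∈ closure (f^[r] '' Set.range fun n => (f^[L])^[n] m) :=
        image_closure_subset_closure_image (hf.iterate r) ⟨p, hp, rfl⟩
      refine closure_mono ?_ h1
      rintro _ ⟨_, ⟨n, rfl⟩, rfl⟩
      exact ⟨r + L * n, by show f^[r + L * n] m = _; rw [Function.iterate_add_apply, Function.iterate_mul]⟩
  intro K hKN hKne hKc hKi
  obtain ⟨q, hq⟩ := hKne
  have hqNU : q ∈ NU := by rw [← horb]; exact hKN hq
  obtain ⟨r, hr, p, hp, rfl⟩ := by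
    simpa only [hNUdef, Set.mem_iUnion, Finset.mem_range, exists_prop] using hqNU
  have hKQne : (K ∩ Q).Nonempty := by
    refine ⟨f^[L - r] (f^[r] p), hKi.iterate (L - r) hq, ?_⟩
    have : f^[L - r] (f^[r] p) = f^[L] p := by
      rw [← Function.iterate_add_apply, Nat.sub_add_cancel hr.le]
    rw [this]
    exact hQinv hp
  have hKQ : K ∩ Q = M₀ := by
    refine hmin _ (Set.inter_subset_right.trans hQM) hKQne (hKc.inter isClosed_closure) ?_
    exact fun z hz => ⟨hKi.iterate L hz.1, hQinv hz.2⟩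
  have hmK : m ∈ K := (hKQ.symm ▸ hm : m ∈ K ∩ Q).1
  apply le_antisymm hKN
  apply closure_minimal _ hKc
  rintro _ ⟨n, rfl⟩
  exact hKi.iterate n hmK

lemma exists_periodic_shadow [CompactSpace X] (f : X → X) (hf : Continuous f)
    (h : HasLimitShadowing f) {x : X} (hx : x ∈ ChainRecurrent f) {ε : ℝ} (hε : 0 < ε) :
    ∃ L, 1 ≤ L ∧ ∃ ξ : ℕ → X, ξ 0 = x ∧ (∀ i, ξ (i + L) = ξ i) ∧
      ∃ z, ∀ i, dist (f^[i] z) (ξ i) ≤ ε := by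
  by_contra hC
  push_neg at hC
  have hxk : ∀ k : ℕ, ChainFromIn f Set.univ ((k : ℝ) + 1)⁻¹ x x := fun k => hx _ (by positivity)
  choose L hL c hc0 hcL hcmem hcd using hxk
  set ξ : ℕ → ℕ → X := fun k i => c k (i % L k) with hξdef
  have hξ0 : ∀ k, ξ k 0 = x := fun k => by simp [hξdef, hc0]
  have hper : ∀ k i, ξ k (i + L k) = ξ k i := fun k i => by
    simp [hξdef, Nat.add_mod_right]
  have hstep : ∀ k j, dist (f (ξ k j)) (ξ k (j + 1)) ≤ ((k : ℝ) + 1)⁻¹ := by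
    intro k j
    have hrL : j % L k < L k := Nat.mod_lt _ (hL k)
    have key : (j + 1) % L k = (j % L k + 1) % L k := by
      conv_lhs => rw [← Nat.div_add_mod j (L k)]
      rw [Nat.add_assoc, Nat.mul_add_mod]
    rcases Nat.lt_or_ge (j % L k + 1) (L k) with h1 | h1
    · have h2 : (j + 1) % L k = j % L k + 1 := by rw [key, Nat.mod_eq_of_lt h1]
      show dist (f (c k (j % L k))) (c k ((j + 1) % L k)) ≤ _
      rw [h2]
      exact hcd k (j % L k) hrL
    · have h1' : j % L k + 1 = L k := le_antisymm hrL h1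
      have h2 : (j + 1) % L k = 0 := by rw [key, h1', Nat.mod_self]
      have h3 := hcd k (j % L k) hrL
      rw [h1', hcL k, ← hc0 k] at h3
      show dist (f (c k (j % L k))) (c k ((j + 1) % L k)) ≤ _
      rw [h2]
      exact h3
  have hnoshadow : ∀ k (z : X), ∃ i, ε < dist (f^[i] z) (ξ k i) :=
    fun k => hC (L k) (hL k) (ξ k) (hξ0 k) (hper k)
  have hNex : ∀ k : ℕ, ∃ N, ∀ z : X, ∃ i ≤ N, ε < dist (f^[i] z) (ξ k i) := by
    by_contra hNC
    push_neg at hNC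
    obtain ⟨k, hk⟩ := hNC
    choose zN hzN using hk
    set V : ℕ → Set X := fun N => {z | ∀ i ≤ N, dist (f^[i] z) (ξ k i) ≤ ε} with hV
    have hVc : ∀ N, IsClosed (V N) := by
      intro N
      have : V N = ⋂ i ∈ Set.Iic N, f^[i] ⁻¹' Metric.closedBall (ξ k i) ε := by
        ext z
        simp [hV, Metric.mem_closedBall]
      rw [this]
      exact isClosed_biInter fun i _ => Metric.isClosed_closedBall.preimage (hf.iterate i)
    have hVne : ∀ N, (V N).Nonempty := fun N => ⟨zN N, fun i hi => (hzN N i hi)⟩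
    have hVnest : ∀ N, V (N + 1) ⊆ V N := fun N z hz i hi => hz i (hi.trans (Nat.le_succ N))
    obtain ⟨z, hz⟩ := IsCompact.nonempty_iInter_of_sequence_nonempty_isCompact_isClosed
      V hVnest hVne ((hVc 0).isCompact) hVc
    obtain ⟨i, hi⟩ := hnoshadow k z
    exact absurd ((Set.mem_iInter.1 hz i) i le_rfl) (not_le.2 hi)
  choose N hN using hNex
  set M : ℕ → ℕ := fun k => (N k + 1) * L k with hM
  have hM1 : ∀ k, 1 ≤ M k := fun k =>
    Nat.one_le_iff_ne_zero.2 (Nat.mul_ne_zero (by omega) (by have := hL k; omega))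
  set T : ℕ → ℕ := fun k => ∑ j ∈ Finset.range k, M j with hT
  have hTsucc : ∀ k, T (k + 1) = T k + M k := fun k => Finset.sum_range_succ M k
  have hTmono : Monotone T := fun a b hab =>
    Finset.sum_le_sum_of_subset (Finset.range_subset_range.2 hab)
  have hTk : ∀ k, k ≤ T k := by
    intro k
    induction k with
    | zero => exact Nat.zero_le _
    | succ n ih => rw [hTsucc]; have := hM1 n; omega
  set stage : ℕ → ℕ := fun i => Nat.findGreatest (fun k => T k ≤ i) i with hstage
  have hstage_le : ∀ i, T (stage i) ≤ i := fun i =>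
    Nat.findGreatest_spec (P := fun k => T k ≤ i) (Nat.zero_le i)
      (by simp [hT, Finset.sum_range_zero])
  have hstage_ge : ∀ k i, T k ≤ i → k ≤ stage i := fun k i hki =>
    Nat.le_findGreatest ((hTk k).trans hki) hki
  have hstage_lt : ∀ i, i < T (stage i + 1) := by
    intro i
    by_contra hcon
    push_neg at hcon
    exact absurd (hstage_ge _ _ hcon) (by omega)
  have hstage_eq : ∀ k j, j < M k → stage (T k + j) = k := by
    intro k j hj
    have h1 : k ≤ stage (T k + j) := hstage_ge k _ (Nat.le_add_right _ _)
    rcases Nat.lt_or_ge (stage (T k + j)) (k + 1) with h2 | h2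
    · omega
    · exfalso
      have h3 : T (k + 1) ≤ T (stage (T k + j)) := hTmono h2
      have h4 := hstage_le (T k + j)
      rw [hTsucc] at h3
      omega
  set ζ : ℕ → X := fun i => ξ (stage i) (i - T (stage i)) with hζ
  have hζT : ∀ k j, j < M k → ζ (T k + j) = ξ k j := by
    intro k j hj
    simp only [hζ, hstage_eq k j hj, Nat.add_sub_cancel_left]
  have hζstep : ∀ i, dist (f (ζ i)) (ζ (i + 1)) ≤ ((stage i : ℝ) + 1)⁻¹ := by
    intro i
    have hTi := hstage_le i
    have hTi2 := hstage_lt i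
    rw [hTsucc] at hTi2
    set k := stage i with hk
    set j := i - T k with hjdef
    have hi : i = T k + j := by omega
    have hjM : j < M k := by omega
    have hζi : ζ i = ξ k j := by rw [hi]; exact hζT k j hjM
    rcases Nat.lt_or_ge (j + 1) (M k) with hc1 | hc1
    · have : ζ (i + 1) = ξ k (j + 1) := by
        have : i + 1 = T k + (j + 1) := by omega
        rw [this]; exact hζT k (j + 1) hc1
      rw [hζi, this]
      exact hstep k j
    · have hj1 : j + 1 = M k := by omega
      have hi1 : i + 1 = T (k + 1) + 0 := by rw [hTsucc]; omega
      have hz1 : ζ (i + 1) = ξ (k + 1) 0 := by rw [hi1]; exact hζT (k + 1) 0 (hM1 (k + 1))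
      have hz2 : ξ (k + 1) 0 = ξ k (j + 1) := by
        rw [hξ0, hj1]
        show x = c k (M k % L k)
        rw [hM]
        show x = c k ((N k + 1) * L k % L k)
        rw [Nat.mul_mod_left, hc0]
      rw [hζi, hz1, hz2]
      exact hstep k j
  have hζlim : IsLimitPseudoOrbit f ζ := by
    have h1 : Tendsto stage atTop atTop :=
      tendsto_atTop_atTop.2 fun k => ⟨T k, fun i hi => hstage_ge k i hi⟩
    have h2 : Tendsto (fun n : ℕ => ((n : ℝ) + 1)⁻¹) atTop (nhds 0) := by
      simpa only [one_div] using tendsto_one_div_add_atTop_nhds_zero_nat (𝕜 := ℝ)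
    exact squeeze_zero (fun i => dist_nonneg) hζstep (h2.comp h1)
  obtain ⟨y, hy⟩ := h ζ hζlim
  have hev : ∀ᶠ i in atTop, dist (ζ i) (f^[i] y) < ε := hy.eventually (gt_mem_nhds hε)
  obtain ⟨I0, hI0⟩ := eventually_atTop.1 hev
  obtain ⟨i, hiN, hgt⟩ := hN I0 (f^[T I0] y)
  have hfi : f^[i] (f^[T I0] y) = f^[T I0 + i] y := by
    rw [Nat.add_comm, Function.iterate_add_apply]
  have hiM : i < M I0 := by
    have h5 : N I0 + 1 ≤ (N I0 + 1) * L I0 := Nat.le_mul_of_pos_right _ (hL I0)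
    have : M I0 = (N I0 + 1) * L I0 := rfl
    omega
  have hζeq : ζ (T I0 + i) = ξ I0 i := hζT I0 i hiM
  have hd : dist (ζ (T I0 + i)) (f^[T I0 + i] y) < ε :=
    hI0 _ (le_trans (hTk I0) (Nat.le_add_right _ _))
  rw [hζeq] at hd
  rw [hfi] at hgt
  rw [dist_comm] at hd
  exact absurd hd (not_lt.2 hgt.le)


lemma chainRecurrent_subset_closure_minimalPoints [CompactSpace X] (f : X → X)
    (hf : Continuous f) (h : HasLimitShadowing f) :
    ChainRecurrent f ⊆ closure (MinimalPoints f) := by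
  intro x hx
  rw [Metric.mem_closure_iff]
  intro ε hε
  obtain ⟨L, hL, ξ, hξ0, hper, z, hz⟩ := exists_periodic_shadow f hf h hx (half_pos hε)
  set Z : Set X := {w | ∀ i, dist (f^[i] w) (ξ i) ≤ ε / 2} with hZ
  have hZc : IsClosed Z := by
    have : Z = ⋂ i, f^[i] ⁻¹' Metric.closedBall (ξ i) (ε / 2) := by
      ext w; simp [hZ, Metric.mem_closedBall]
    rw [this]
    exact isClosed_iInter fun i => Metric.isClosed_closedBall.preimage (hf.iterate i)
  have hZne : Z.Nonempty := ⟨z, hz⟩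
  have hZi : Set.MapsTo f^[L] Z Z := by
    intro w hw i
    have heq : f^[i] (f^[L] w) = f^[i + L] w := (Function.iterate_add_apply f i L w).symm
    show dist (f^[i] (f^[L] w)) (ξ i) ≤ ε / 2
    rw [heq, ← hper i]
    exact hw (i + L)
  obtain ⟨M₀, hM₀Z, hM₀ne, hM₀c, hM₀i, hM₀min⟩ := exists_minimal_subset (f^[L]) Z hZc hZne hZi
  obtain ⟨m, hm⟩ := hM₀ne
  refine ⟨m, isMinimalPoint_of_iterate f hf hL M₀ ⟨m, hm⟩ hM₀c hM₀i hM₀min m hm, ?_⟩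
  have hdm := hM₀Z hm 0
  rw [Function.iterate_zero_apply, hξ0] at hdm
  rw [dist_comm]
  linarith

/-- limit shadowing implies CR(f) = Ω(f) = closure(M(f)). -/
theorem limit_shadowing_CR_eq_Omega_eq_closure_minimal
    [CompactSpace X] (f : X → X) (hf : Continuous f)
    (h : HasLimitShadowing f) :
    ChainRecurrent f = NonWandering f ∧
      NonWandering f = closure (MinimalPoints f) := by
  have h1 : ChainRecurrent f ⊆ closure (MinimalPoints f) :=
    chainRecurrent_subset_closure_minimalPoints f hf h
  have h2 : closure (MinimalPoints f) ⊆ NonWandering f :=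
    (isClosed_nonWandering f).closure_subset_iff.2 (minimalPoints_subset_nonWandering f hf)
  have h3 : NonWandering f ⊆ ChainRecurrent f := nonWandering_subset_chainRecurrent f hf
  exact ⟨le_antisymm (h1.trans h2) h3, le_antisymm (h3.trans h1) h2⟩
end

section
/- Let f be a continuous self-map of a compact metric space X and S ⊂ X a compact f-invariant subset such that every point of S is chain recurrent for f|_S. If f has the limit shadowing property around S (every limit pseudo orbit contained in S has a limit shadowing point in X), then f has the shadowing property around S (for every ε>0 there is δ>0 such that every δ-pseudo orbit contained in S is ε-shadowed by some point of X). -/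
open Filter Topology

variable {X : Type*} [MetricSpace X]

set_option linter.unusedSectionVars false

namespace LSProof

variable {f : X → X} {S : Set X} {δ δ' r : ℝ} {a b b' : X}

def app (k1 : ℕ) (c1 c2 : ℕ → X) : ℕ → X := fun i => if i ≤ k1 then c1 i else c2 (i - k1)

lemma app_left {k1 : ℕ} {c1 c2 : ℕ → X} {i : ℕ} (h : i ≤ k1) : app k1 c1 c2 i = c1 i :=
  if_pos h

lemma app_right {k1 : ℕ} {c1 c2 : ℕ → X} (hj : c1 k1 = c2 0) (i : ℕ) :
    app k1 c1 c2 (k1 + i) = c2 i := by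
  rcases Nat.eq_zero_or_pos i with rfl | hi
  · simpa [app] using hj
  · have h : ¬ (k1 + i ≤ k1) := by omega
    simp only [app, h, if_false]
    congr 1
    omega

lemma app_mem {k1 k2 : ℕ} {c1 c2 : ℕ → X} (h1 : ∀ i ≤ k1, c1 i ∈ S) (h2 : ∀ i ≤ k2, c2 i ∈ S) :
    ∀ i ≤ k1 + k2, app k1 c1 c2 i ∈ S := by
  intro i hi
  unfold app
  split
  · exact h1 i ‹i ≤ k1›
  · exact h2 (i - k1) (by omega)

lemma app_err {k1 k2 : ℕ} {c1 c2 : ℕ → X} (hj : c1 k1 = c2 0)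
    (h1 : ∀ i < k1, dist (f (c1 i)) (c1 (i+1)) ≤ δ)
    (h2 : ∀ i < k2, dist (f (c2 i)) (c2 (i+1)) ≤ δ) :
    ∀ i < k1 + k2, dist (f (app k1 c1 c2 i)) (app k1 c1 c2 (i+1)) ≤ δ := by
  intro i hi
  by_cases h : i + 1 ≤ k1
  · rw [app_left (by omega : i ≤ k1), app_left h]
    exact h1 i (by omega)
  · obtain ⟨t, rfl⟩ : ∃ t, i = k1 + t := ⟨i - k1, by omega⟩
    rw [show k1 + t + 1 = k1 + (t + 1) by omega]
    rw [app_right hj t, app_right hj (t+1)]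
    exact h2 t (by omega)

lemma chain_trans (h1 : ChainFromIn f S δ a b) (h2 : ChainFromIn f S δ b b') :
    ChainFromIn f S δ a b' := by
  obtain ⟨k1, hk1, c1, hc10, hc1k, hS1, he1⟩ := h1
  obtain ⟨k2, hk2, c2, hc20, hc2k, hS2, he2⟩ := h2
  have hj : c1 k1 = c2 0 := by rw [hc1k, hc20]
  refine ⟨k1 + k2, by omega, app k1 c1 c2, ?_, ?_, app_mem hS1 hS2, app_err hj he1 he2⟩
  · rw [app_left (Nat.zero_le _), hc10]
  · rw [app_right hj k2, hc2k]

lemma chain_single (ha : a ∈ S) (hb : b ∈ S) (h : dist (f a) b ≤ δ) : ChainFromIn f S δ a b := by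
  refine ⟨1, le_rfl, fun i => if i = 0 then a else b, by simp, by simp, ?_, ?_⟩
  · intro i _
    dsimp only
    split <;> assumption
  · intro i hi
    interval_cases i
    simpa using h

lemma chain_mem_right (h : ChainFromIn f S δ a b) : b ∈ S := by
  obtain ⟨k, hk, c, h0, hkc, hS, _⟩ := h
  rw [← hkc]; exact hS k le_rfl

lemma chain_replace_end (h : ChainFromIn f S δ a b) (hb' : b' ∈ S) (hd : dist b b' ≤ r) :
    ChainFromIn f S (δ + r) a b' := by
  have hr : 0 ≤ r := le_trans dist_nonneg hd
  obtain ⟨k, hk, c, h0, hkc, hSc, he⟩ := h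
  refine ⟨k, hk, fun i => if i = k then b' else c i, ?_, by simp, ?_, ?_⟩
  · dsimp only
    rw [if_neg (by omega : (0:ℕ) ≠ k)]; exact h0
  · intro i hi
    dsimp only
    split
    · exact hb'
    · exact hSc i hi
  · intro i hi
    dsimp only
    rw [if_neg (by omega : i ≠ k)]
    by_cases h2 : i + 1 = k
    · rw [if_pos h2]
      have hb2 : dist (c (i+1)) b' ≤ r := by rw [h2, hkc]; exact hd
      calc dist (f (c i)) b' ≤ dist (f (c i)) (c (i+1)) + dist (c (i+1)) b' := dist_triangle _ _ _
        _ ≤ δ + r := add_le_add (he i hi) hb2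
    · rw [if_neg h2]
      exact (he i hi).trans (by linarith)

lemma reverse_chain [CompactSpace X] (hf : Continuous f)
    (hCR : ∀ x ∈ S, ∀ δ > 0, ChainFromIn f S δ x x) {γ : ℝ} (hγ : 0 < γ) :
    ∃ η > 0, η ≤ γ ∧ ∀ a b : X, ChainFromIn f S η a b → ChainFromIn f S γ b a := by
  obtain ⟨d, hd, hmod⟩ := Metric.uniformContinuous_iff.1
    (CompactSpace.uniformContinuous_of_continuous hf) (γ/2) (by linarith)
  refine ⟨min (γ/4) (d/4), by positivity, le_trans (min_le_left _ _) (by linarith), ?_⟩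
  set η := min (γ/4) (d/4) with hη
  have hη0 : 0 < η := by positivity
  have hηγ : η ≤ γ/4 := min_le_left _ _
  have hηd : η ≤ d/4 := min_le_right _ _
  intro a b hab
  have prop : ∀ (m : ℕ) (e : ℕ → X), (∀ i ≤ m, e i ∈ S) →
      (∀ i < m, dist (f (e i)) (e (i+1)) ≤ γ) →
      ChainFromIn f S γ b (e 0) → ChainFromIn f S γ b (e m) := by
    intro m
    induction m with
    | zero => intro e _ _ h; exact h
    | succ n ih =>
      intro e hSe he h
      have hn := ih e (fun i hi => hSe i (by omega)) (fun i hi => he i (by omega)) h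
      exact chain_trans hn (chain_single (hSe n (by omega)) (hSe (n+1) le_rfl) (he n (by omega)))
  have absorb : ∀ z ∈ S, ∀ z₀, ChainFromIn f S γ b z₀ → dist z z₀ ≤ 2*η →
      ChainFromIn f S γ b z := by
    intro z hz z₀ hz₀ hdist
    obtain ⟨m, hm, e, he0, hem, heS, hee⟩ := hCR z hz η hη0
    have he1 : ChainFromIn f S γ b (e 1) := by
      apply chain_trans hz₀
      apply chain_single (chain_mem_right hz₀) (heS 1 hm)
      have h1 : dist (f z₀) (f z) < γ/2 := hmod (by rw [dist_comm]; linarith)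
      have h2 : dist (f z) (e 1) ≤ η := by
        have := hee 0 (by omega); rwa [he0] at this
      calc dist (f z₀) (e 1) ≤ dist (f z₀) (f z) + dist (f z) (e 1) := dist_triangle _ _ _
        _ ≤ γ/2 + η := by linarith
        _ ≤ γ := by linarith
    have h3 : ChainFromIn f S γ b (e (m - 1 + 1)) :=
      prop (m - 1) (fun i => e (i + 1)) (fun i hi => heS (i+1) (by omega))
        (fun i hi => (hee (i+1) (by omega)).trans (by linarith)) he1
    rw [show m - 1 + 1 = m by omega, hem] at h3
    exact h3
  obtain ⟨k, hk, cc, hc0, hck, hcS, hce⟩ := hab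
  have main : ∀ t ≤ k, ChainFromIn f S γ b (cc (k - t)) := by
    intro t
    induction t with
    | zero =>
      intro _
      rw [Nat.sub_zero, hck]
      exact hCR b (by rw [← hck]; exact hcS k le_rfl) γ hγ
    | succ n ih =>
      intro hn
      have hprev := ih (by omega)
      have hik : k - (n+1) + 1 = k - n := by omega
      have hiS : cc (k - (n+1)) ∈ S := hcS _ (by omega)
      obtain ⟨m, hm, e, he0, hem, heS, hee⟩ := hCR (cc (k - (n+1))) hiS η hη0
      have he1 : ChainFromIn f S γ b (e 1) := by
        apply absorb (e 1) (heS 1 hm) (cc (k - (n+1) + 1)) (by rw [hik]; exact hprev)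
        have h1 : dist (f (cc (k - (n+1)))) (e 1) ≤ η := by
          have := hee 0 (by omega); rwa [he0] at this
        have h2 : dist (f (cc (k - (n+1)))) (cc (k - (n+1) + 1)) ≤ η := hce _ (by omega)
        calc dist (e 1) (cc (k - (n+1) + 1))
            ≤ dist (e 1) (f (cc (k - (n+1)))) + dist (f (cc (k - (n+1)))) (cc (k - (n+1) + 1)) :=
              dist_triangle _ _ _
          _ ≤ η + η := by rw [dist_comm]; exact add_le_add h1 h2
          _ = 2*η := by ring
      have h3 : ChainFromIn f S γ b (e (m - 1 + 1)) :=
        prop (m - 1) (fun i => e (i + 1)) (fun j hj => heS (j+1) (by omega))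
          (fun j hj => (hee (j+1) (by omega)).trans (by linarith)) he1
      rw [show m - 1 + 1 = m by omega, hem] at h3
      exact h3
  have := main k le_rfl
  rwa [Nat.sub_self, hc0] at this

def T (L : ℕ → ℕ) : ℕ → ℕ
  | 0 => 0
  | (j+1) => T L j + L j

def G (L : ℕ → ℕ) : ℕ → ℕ × ℕ
  | 0 => (0, 0)
  | (i+1) => if (G L i).2 + 1 < L (G L i).1 then ((G L i).1, (G L i).2 + 1) else ((G L i).1 + 1, 0)

variable {L : ℕ → ℕ}

lemma G_snd_lt (hL : ∀ j, 1 ≤ L j) : ∀ i, (G L i).2 < L (G L i).1 := by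
  intro i
  induction i with
  | zero => simp [G]; exact hL 0
  | succ n ih =>
    rw [G]
    split
    · simpa using ‹(G L n).2 + 1 < L (G L n).1›
    · exact hL ((G L n).1 + 1)

lemma G_T_aux (j : ℕ) (hj : G L (T L j) = (j, 0)) :
    ∀ o, o < L j → G L (T L j + o) = (j, o) := by
  intro o
  induction o with
  | zero => intro _; simpa using hj
  | succ n ih =>
    intro hn
    have hprev := ih (by omega)
    have he : T L j + (n+1) = (T L j + n) + 1 := rfl
    rw [he, G, hprev]
    simp [hn]

lemma G_T (hL : ∀ j, 1 ≤ L j) : ∀ j, G L (T L j) = (j, 0) := by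
  intro j
  induction j with
  | zero => simp [T, G]
  | succ n ih =>
    have hlast := G_T_aux n ih (L n - 1) (by have := hL n; omega)
    have he : T L (n+1) = (T L n + (L n - 1)) + 1 := by
      show T L n + L n = _
      have := hL n; omega
    rw [he, G, hlast]
    have hcond : ¬ ((n, L n - 1).2 + 1 < L (n, L n - 1).1) := by
      simp only []
      have := hL n; omega
    rw [if_neg hcond]

lemma T_ge (hL : ∀ j, 1 ≤ L j) : ∀ j, j ≤ T L j := by
  intro j
  induction j with
  | zero => simp [T]
  | succ n ih =>
    show n + 1 ≤ T L n + L n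
    have := hL n; omega

lemma G_fst_mono : Monotone (fun i => (G L i).1) := by
  apply monotone_nat_of_le_succ
  intro n
  rw [G]
  split <;> simp

lemma G_fst_tendsto (hL : ∀ j, 1 ≤ L j) : Tendsto (fun i => (G L i).1) atTop atTop := by
  rw [tendsto_atTop]
  intro b
  rw [eventually_atTop]
  refine ⟨T L b, fun i hi => ?_⟩
  have h1 : (G L (T L b)).1 ≤ (G L i).1 := G_fst_mono hi
  rw [G_T hL b] at h1
  exact h1

end LSProof

/-- limit shadowing around a chain recurrent compact invariant set `S`
implies shadowing around `S`. -/
theorem limit_shadowing_around_implies_shadowing_around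
    [CompactSpace X] (f : X → X) (hf : Continuous f)
    (S : Set X) (hS : IsCompact S) (hinv : Set.MapsTo f S S)
    (hCR : ∀ x ∈ S, ∀ δ > 0, ChainFromIn f S δ x x)
    (hls : ∀ x : ℕ → X, (∀ i, x i ∈ S) → IsLimitPseudoOrbit f x →
      ∃ y, LimitShadows f x y) :
    ∀ ε > 0, ∃ δ > 0, ∀ x : ℕ → X, (∀ i, x i ∈ S) →
      IsPseudoOrbit f δ x → ∃ y, Shadows f ε x y := by
  by_contra hcon
  push_neg at hcon
  obtain ⟨ε, hε, hbad0⟩ := hcon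
  -- Step 1: finite bad segments with arbitrarily small chain errors
  have hfin : ∀ δ > (0:ℝ), ∃ (x : ℕ → X) (N : ℕ), 1 ≤ N ∧ (∀ i, x i ∈ S) ∧
      IsPseudoOrbit f δ x ∧ ∀ y, ∃ i ≤ N, ε < dist (x i) (f^[i] y) := by
    intro δ hδ
    obtain ⟨x, hxS, hxP, hxB⟩ := hbad0 δ hδ
    have hN : ∃ N : ℕ, ∀ y, ∃ i ≤ N, ε < dist (x i) (f^[i] y) := by
      by_contra hno
      push_neg at hno
      set K : ℕ → Set X := fun n => {y | ∀ i ≤ n, dist (x i) (f^[i] y) ≤ ε} with hK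
      have hKc : ∀ n, IsClosed (K n) := by
        intro n
        have hEq : K n = ⋂ (i : ℕ), ⋂ (_ : i ≤ n), {y | dist (x i) (f^[i] y) ≤ ε} := by
          ext y
          simp [hK, Set.mem_iInter]
        rw [hEq]
        refine isClosed_iInter fun i => isClosed_iInter fun _ => ?_
        exact isClosed_le (continuous_const.dist (hf.iterate i)) continuous_const
      have hnon : (⋂ n, K n).Nonempty := by
        apply IsCompact.nonempty_iInter_of_sequence_nonempty_isCompact_isClosed
        · intro n y hy
          intro i hi
          exact hy i (by omega)
        · intro n
          obtain ⟨y, hy⟩ := hno n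
          exact ⟨y, hy⟩
        · exact (hKc 0).isCompact
        · exact hKc
      obtain ⟨y, hy⟩ := hnon
      exact hxB y (fun i => (Set.mem_iInter.1 hy i) i le_rfl)
    obtain ⟨N, hN⟩ := hN
    refine ⟨x, max N 1, le_max_right _ _, hxS, hxP, fun y => ?_⟩
    obtain ⟨i, hi, hgt⟩ := hN y
    exact ⟨i, hi.trans (le_max_left _ _), hgt⟩
  -- Step 2: a cluster point of starting points of bad segments
  have hseq : ∀ k : ℕ, ∃ (x : ℕ → X) (N : ℕ), 1 ≤ N ∧ (∀ i, x i ∈ S) ∧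
      IsPseudoOrbit f (1/(k+1)) x ∧ ∀ y, ∃ i ≤ N, ε < dist (x i) (f^[i] y) :=
    fun k => hfin (1/(k+1)) (by positivity)
  choose xs Ns hNs1 hxsS hxsP hxsB using hseq
  obtain ⟨A, hA, φ, hφ, hconv⟩ := hS.tendsto_subseq (fun k => hxsS k 0)
  -- Step 3: bad segments starting near A, with arbitrarily small errors
  have hbadnear : ∀ θ > (0:ℝ), ∃ (x : ℕ → X) (N : ℕ), 1 ≤ N ∧ (∀ i, x i ∈ S) ∧
      IsPseudoOrbit f θ x ∧ dist (x 0) A ≤ θ ∧ ∀ y, ∃ i ≤ N, ε < dist (x i) (f^[i] y) := by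
    intro θ hθ
    obtain ⟨M, hM⟩ := Metric.tendsto_atTop.1 hconv θ hθ
    obtain ⟨K0, hK0⟩ := exists_nat_one_div_lt hθ
    set k := max M K0 with hk
    refine ⟨xs (φ k), Ns (φ k), hNs1 (φ k), hxsS (φ k), ?_, ?_, hxsB (φ k)⟩
    · intro i
      refine (hxsP (φ k) i).trans ?_
      have h0 : K0 ≤ φ k := le_trans (le_max_right M K0) hφ.le_apply
      have h1 : (K0:ℝ) + 1 ≤ (φ k : ℝ) + 1 := by
        have : (K0:ℝ) ≤ (φ k : ℝ) := Nat.cast_le.2 h0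
        linarith
      calc (1:ℝ)/(φ k + 1) ≤ 1/(K0+1) := one_div_le_one_div_of_le (by positivity) h1
        _ ≤ θ := le_of_lt hK0
    · exact le_of_lt (hM k (le_max_left M K0))
  -- Step 4: blocks from A to A, each containing a bad segment
  obtain ⟨η', hη'0, hη'rc⟩ : ∃ η' : ℝ → ℝ, (∀ γ > (0:ℝ), 0 < η' γ ∧ η' γ ≤ γ) ∧
      ∀ γ > (0:ℝ), ∀ a b : X, ChainFromIn f S (η' γ) a b → ChainFromIn f S γ b a := by
    have h : ∀ γ : ℝ, ∃ η : ℝ, γ > 0 → (0 < η ∧ η ≤ γ) ∧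
        ∀ a b : X, ChainFromIn f S η a b → ChainFromIn f S γ b a := by
      intro γ
      by_cases hγ : 0 < γ
      · obtain ⟨η, hη0, hηγ, hrev⟩ := LSProof.reverse_chain hf hCR hγ
        exact ⟨η, fun _ => ⟨⟨hη0, hηγ⟩, hrev⟩⟩
      · exact ⟨1, fun h' => absurd h' hγ⟩
    choose η'' hη'' using h
    exact ⟨η'', fun γ hγ => (hη'' γ hγ).1, fun γ hγ => (hη'' γ hγ).2⟩
  have hblocks : ∀ j : ℕ, ∃ (L s N : ℕ) (c : ℕ → X), 1 ≤ L ∧ s + N ≤ L ∧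
      c 0 = A ∧ c L = A ∧ (∀ i ≤ L, c i ∈ S) ∧
      (∀ i < L, dist (f (c i)) (c (i+1)) ≤ 1/(j+1)) ∧
      (∀ y, ∃ i ≤ N, ε < dist (c (s + i)) (f^[i] y)) := by
    intro j
    set τ : ℝ := 1/(j+1) with hτ
    have hτ0 : 0 < τ := by positivity
    have hτ20 : (0:ℝ) < τ/2 := by linarith
    set η := η' (τ/2) with hηdef
    obtain ⟨hη0, hηγ⟩ := hη'0 (τ/2) hτ20
    obtain ⟨x, N, hN1, hxS, hxP, hx0, hxB⟩ := hbadnear η hη0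
    have hσ : ChainFromIn f S η (x 0) (x N) :=
      ⟨N, hN1, x, rfl, rfl, fun i _ => hxS i, fun i _ => hxP i⟩
    have hB2 : ChainFromIn f S (τ/2 + η) (x N) A :=
      LSProof.chain_replace_end (hη'rc (τ/2) hτ20 (x 0) (x N) hσ) hA hx0
    have hB1 : ChainFromIn f S (η + η) A (x 0) :=
      LSProof.chain_replace_end (hCR A hA η hη0) (hxS 0) (by rw [dist_comm]; exact hx0)
    obtain ⟨k1, hk11, c1, hc10, hc1k, hc1S, hc1e⟩ := hB1
    obtain ⟨k2, hk21, c2, hc20, hc2k, hc2S, hc2e⟩ := hB2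
    have hc1e' : ∀ i < k1, dist (f (c1 i)) (c1 (i+1)) ≤ τ :=
      fun i hi => (hc1e i hi).trans (by linarith)
    have hxe' : ∀ i < N, dist (f (x i)) (x (i+1)) ≤ τ :=
      fun i _ => (hxP i).trans (by linarith)
    have hc2e' : ∀ i < k2, dist (f (c2 i)) (c2 (i+1)) ≤ τ :=
      fun i hi => (hc2e i hi).trans (by linarith)
    have hjx : x N = c2 0 := hc20.symm
    have hDmem : ∀ i ≤ N + k2, LSProof.app N x c2 i ∈ S :=
      LSProof.app_mem (fun i _ => hxS i) hc2S
    have hDerr : ∀ i < N + k2,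
        dist (f (LSProof.app N x c2 i)) (LSProof.app N x c2 (i+1)) ≤ τ :=
      LSProof.app_err hjx hxe' hc2e'
    have hj1 : c1 k1 = LSProof.app N x c2 0 := by
      rw [hc1k, LSProof.app_left (Nat.zero_le N)]
    refine ⟨k1 + (N + k2), k1, N, LSProof.app k1 c1 (LSProof.app N x c2), by omega, by omega,
      ?_, ?_, LSProof.app_mem hc1S hDmem, LSProof.app_err hj1 hc1e' hDerr, ?_⟩
    · rw [LSProof.app_left (Nat.zero_le k1), hc10]
    · rw [LSProof.app_right hj1 (N + k2), LSProof.app_right hjx k2, hc2k]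
    · intro y
      obtain ⟨i, hiN, hgt⟩ := hxB y
      refine ⟨i, hiN, ?_⟩
      have hval : LSProof.app k1 c1 (LSProof.app N x c2) (k1 + i) = x i := by
        rw [LSProof.app_right hj1 i, LSProof.app_left hiN]
      rwa [hval]
  choose L s N c hL1 hsN hc0 hcL hcS hce hcbad using hblocks
  -- Step 5: glue blocks into one limit pseudo orbit
  set Z : ℕ → X := fun i => c (LSProof.G L i).1 (LSProof.G L i).2 with hZ
  have hGT := LSProof.G_T hL1
  have hZval : ∀ j o, o ≤ L j → Z (LSProof.T L j + o) = c j o := by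
    intro j o ho
    rcases lt_or_eq_of_le ho with h | h
    · rw [hZ]
      dsimp only
      rw [LSProof.G_T_aux j (hGT j) o h]
    · have he : LSProof.T L j + o = LSProof.T L (j+1) := by
        rw [h]; rfl
      rw [he, hZ]
      dsimp only
      rw [hGT (j+1)]
      rw [hc0 (j+1), h]
      exact (hcL j).symm
  have hstep : ∀ i, ∃ b o, o < L b ∧ Z i = c b o ∧ Z (i+1) = c b (o+1) ∧
      (LSProof.G L i).1 = b := by
    intro i
    refine ⟨(LSProof.G L i).1, (LSProof.G L i).2, LSProof.G_snd_lt hL1 i, rfl, ?_, rfl⟩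
    rw [hZ]
    dsimp only
    by_cases hcond : (LSProof.G L i).2 + 1 < L (LSProof.G L i).1
    · rw [show LSProof.G L (i+1) = ((LSProof.G L i).1, (LSProof.G L i).2 + 1) from by
        rw [LSProof.G, if_pos hcond]]
    · have h2 : (LSProof.G L i).2 + 1 = L (LSProof.G L i).1 := by
        have := LSProof.G_snd_lt hL1 i; omega
      rw [show LSProof.G L (i+1) = ((LSProof.G L i).1 + 1, 0) from by
        rw [LSProof.G, if_neg hcond]]
      show c ((LSProof.G L i).1 + 1) 0 = _
      rw [hc0, h2]
      exact (hcL _).symm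
  have hZS : ∀ i, Z i ∈ S := by
    intro i
    obtain ⟨b, o, ho, hzo, _, _⟩ := hstep i
    rw [hzo]
    exact hcS b o (le_of_lt ho)
  have hZerr : ∀ i, dist (f (Z i)) (Z (i+1)) ≤ 1/(((LSProof.G L i).1 : ℝ) + 1) := by
    intro i
    obtain ⟨b, o, ho, hzo, hzo1, hb⟩ := hstep i
    rw [hzo, hzo1, hb]
    exact hce b o ho
  have hZlim : IsLimitPseudoOrbit f Z := by
    show Tendsto (fun i => dist (f (Z i)) (Z (i + 1))) atTop (nhds 0)
    apply squeeze_zero (fun i => dist_nonneg) hZerr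
    exact tendsto_one_div_add_atTop_nhds_zero_nat.comp (LSProof.G_fst_tendsto hL1)
  -- Step 6: derive the contradiction
  obtain ⟨y, hy⟩ := hls Z hZS hZlim
  have hy2 : Tendsto (fun i => dist (Z i) (f^[i] y)) atTop (nhds 0) := hy
  obtain ⟨I, hI⟩ := Metric.tendsto_atTop.1 hy2 ε hε
  have hI' : ∀ i ≥ I, dist (Z i) (f^[i] y) < ε := by
    intro i hi
    have h := hI i hi
    rwa [Real.dist_0_eq_abs, abs_of_nonneg dist_nonneg] at h
  obtain ⟨i, hiN, hgt⟩ := hcbad I (f^[LSProof.T L I + s I] y)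
  have hidx : Z (LSProof.T L I + (s I + i)) = c I (s I + i) :=
    hZval I (s I + i) (by have := hsN I; omega)
  have hiter : f^[i] (f^[LSProof.T L I + s I] y) = f^[LSProof.T L I + (s I + i)] y := by
    rw [← Function.iterate_add_apply]
    congr 1
    omega
  rw [hiter] at hgt
  have hge : I ≤ LSProof.T L I + (s I + i) := by
    have := LSProof.T_ge hL1 I; omega
  have hlt := hI' _ hge
  rw [hidx] at hlt
  linarith
end

section
/- If a continuous self-map f of a compact metric space has the shadowing property around the closure of its set of minimal points (i.e., for every ε>0 there is δ>0 such that every δ-pseudo orbit contained in closure(M(f)) is ε-shadowed by some point of X), then the restriction of f to closure(M(f)) has the shadowing property. -/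
open Filter Topology

variable {X : Type*} [MetricSpace X]

section AuxLemmas

variable {X : Type*} [MetricSpace X] {f : X → X}

lemma orbit_mem_orbitClosure (f : X → X) (x : X) (n : ℕ) : f^[n] x ∈ orbitClosure f x :=
  subset_closure ⟨n, rfl⟩

lemma self_mem_orbitClosure (f : X → X) (x : X) : x ∈ orbitClosure f x :=
  orbit_mem_orbitClosure f x 0

lemma orbitClosure_subset_of_mapsTo {g : X → X} {A : Set X} (hA : Set.MapsTo g A A)
    (hAc : IsClosed A) {w : X} (hw : w ∈ A) : orbitClosure g w ⊆ A := by
  apply closure_minimal _ hAc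
  rintro z ⟨n, rfl⟩
  show g^[n] w ∈ A
  induction n with
  | zero => exact hw
  | succ n ih => rw [Function.iterate_succ_apply']; exact hA ih

lemma mapsTo_orbitClosure (hf : Continuous f) (x : X) :
    Set.MapsTo f (orbitClosure f x) (orbitClosure f x) := by
  intro z hz
  have h2 : f z ∈ closure (f '' Set.range fun n => f^[n] x) :=
    image_closure_subset_closure_image hf ⟨z, hz, rfl⟩
  refine closure_mono ?_ h2
  rintro u ⟨v, ⟨n, rfl⟩, rfl⟩
  exact ⟨n + 1, by simp [Function.iterate_succ_apply']⟩

lemma orbitClosure_iterate_subset (f : X → X) (x : X) (k : ℕ) :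
    orbitClosure f (f^[k] x) ⊆ orbitClosure f x := by
  apply closure_mono
  rintro z ⟨n, rfl⟩
  exact ⟨n + k, Function.iterate_add_apply f n k x⟩

lemma orbitClosure_iterate_eq (hf : Continuous f) {x : X} (hx : IsMinimalPoint f x) (k : ℕ) :
    orbitClosure f (f^[k] x) = orbitClosure f x :=
  hx _ (orbitClosure_iterate_subset f x k) ⟨f^[k] x, self_mem_orbitClosure f _⟩
    isClosed_closure (mapsTo_orbitClosure hf _)

lemma isMinimalPoint_iterate (hf : Continuous f) {x : X} (hx : IsMinimalPoint f x) (k : ℕ) :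
    IsMinimalPoint f (f^[k] x) := by
  intro K hK hKne hKc hKm
  rw [orbitClosure_iterate_eq hf hx k] at hK ⊢
  exact hx K hK hKne hKc hKm

lemma minimal_recur (hf : Continuous f) {x : X} (hx : IsMinimalPoint f x)
    {ρ : ℝ} (hρ : 0 < ρ) (N : ℕ) : ∃ T, N ≤ T ∧ dist (f^[T] x) x ≤ ρ := by
  have hmem : x ∈ orbitClosure f (f^[N] x) := by
    rw [orbitClosure_iterate_eq hf hx N]; exact self_mem_orbitClosure f x
  rw [orbitClosure, Metric.mem_closure_iff] at hmem
  obtain ⟨z, ⟨n, rfl⟩, hd⟩ := hmem ρ hρ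
  refine ⟨n + N, Nat.le_add_left N n, ?_⟩
  rw [Function.iterate_add_apply]
  rw [dist_comm] at hd
  exact hd.le

lemma exists_minimalPoint_mem [CompactSpace X] {g : X → X} (hg : Continuous g)
    {K : Set X} (hKne : K.Nonempty) (hKc : IsClosed K) (hKm : Set.MapsTo g K K) :
    ∃ w ∈ K, IsMinimalPoint g w := by
  set S : Set (Set X) := {A | A ⊆ K ∧ A.Nonempty ∧ IsClosed A ∧ Set.MapsTo g A A} with hSdef
  have hzorn : ∀ c ⊆ S, IsChain (· ⊆ ·) c → ∃ lb ∈ S, ∀ s ∈ c, lb ⊆ s := ?_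
  · obtain ⟨J, hJmin⟩ := zorn_superset S hzorn
    have hJS : J ∈ S := hJmin.prop
    obtain ⟨w, hw⟩ := hJS.2.1
    refine ⟨w, hJS.1 hw, ?_⟩
    have hJc : IsClosed J := hJS.2.2.1
    have horb : orbitClosure g w = J := by
      have hsub : orbitClosure g w ⊆ J := orbitClosure_subset_of_mapsTo hJS.2.2.2 hJc hw
      exact Set.Subset.antisymm hsub
        (hJmin.le_of_le ⟨hsub.trans hJS.1, ⟨w, self_mem_orbitClosure g w⟩, isClosed_closure,
          mapsTo_orbitClosure hg w⟩ hsub)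
    intro K' hK' hK'ne hK'c hK'm
    rw [horb] at hK' ⊢
    exact Set.Subset.antisymm hK'
      (hJmin.le_of_le ⟨hK'.trans hJS.1, hK'ne, hK'c, hK'm⟩ hK')
  · intro c hcS hchain
    rcases c.eq_empty_or_nonempty with rfl | hcne
    · exact ⟨K, ⟨subset_rfl, hKne, hKc, hKm⟩, by simp⟩
    · have hne : Nonempty c := hcne.to_subtype
      have hdir : DirectedOn (· ⊇ ·) c := by
        intro A hA B hB
        rcases eq_or_ne A B with rfl | hAB
        · exact ⟨A, hA, subset_rfl, subset_rfl⟩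
        · rcases hchain hA hB hAB with h | h
          · exact ⟨A, hA, subset_rfl, h⟩
          · exact ⟨B, hB, h, subset_rfl⟩
      have hnonempty : (⋂₀ c).Nonempty :=
        IsCompact.nonempty_sInter_of_directed_nonempty_isCompact_isClosed hdir
          (fun U hU => (hcS hU).2.1) (fun U hU => (hcS hU).2.2.1.isCompact)
          (fun U hU => (hcS hU).2.2.1)
      obtain ⟨A₀, hA₀⟩ := hcne
      refine ⟨⋂₀ c, ⟨(Set.sInter_subset_of_mem hA₀).trans (hcS hA₀).1, hnonempty,
        isClosed_sInter fun U hU => (hcS hU).2.2.1, ?_⟩, fun s hs => Set.sInter_subset_of_mem hs⟩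
      intro u hu
      rw [Set.mem_sInter] at hu ⊢
      exact fun U hU => (hcS hU).2.2.2 (hu U hU)

lemma isMinimalPoint_of_iterate_s3 [CompactSpace X] (hf : Continuous f) {p : ℕ} (hp : 1 ≤ p)
    {w : X} (hw : IsMinimalPoint (f^[p]) w) : IsMinimalPoint f w := by
  set A := orbitClosure (f^[p]) w with hAdef
  have hAc : IsClosed A := isClosed_closure
  have hAm : Set.MapsTo (f^[p]) A A := mapsTo_orbitClosure (hf.iterate p) w
  have hwA : w ∈ A := self_mem_orbitClosure _ w
  have hU : orbitClosure f w ⊆ ⋃ j ∈ Finset.range p, f^[j] '' A := by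
    apply closure_minimal
    · rintro z ⟨n, rfl⟩
      have h1 : f^[n] w = f^[n % p] ((f^[p])^[n / p] w) := by
        conv_lhs => rw [← Nat.mod_add_div n p]
        rw [Function.iterate_add_apply, Function.iterate_mul]
      refine Set.mem_biUnion (Finset.mem_range.mpr (Nat.mod_lt n hp)) ?_
      exact ⟨(f^[p])^[n / p] w, orbit_mem_orbitClosure _ _ _, h1.symm⟩
    · refine Set.Finite.isClosed_biUnion (Finset.finite_toSet _) fun j _ => ?_
      exact (hAc.isCompact.image (hf.iterate j)).isClosed
  intro K hK hKne hKc hKm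
  obtain ⟨z, hz⟩ := hKne
  have hzU := hU (hK hz)
  rw [Set.mem_iUnion₂] at hzU
  obtain ⟨j, hjp, a, haA, hza⟩ := hzU
  rw [Finset.mem_range] at hjp
  have hKA : (K ∩ A).Nonempty := by
    refine ⟨f^[p - j] z, hKm.iterate (p - j) hz, ?_⟩
    rw [← hza, ← Function.iterate_add_apply]
    have hpj : p - j + j = p := by omega
    rw [hpj]
    exact hAm haA
  have hKAm : Set.MapsTo (f^[p]) (K ∩ A) (K ∩ A) :=
    fun u hu => ⟨hKm.iterate p hu.1, hAm hu.2⟩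
  have heq : K ∩ A = A := hw _ Set.inter_subset_right hKA (hKc.inter hAc) hKAm
  have hwK : w ∈ K := by
    have : w ∈ K ∩ A := heq.symm ▸ hwA
    exact this.1
  exact Set.Subset.antisymm hK (orbitClosure_subset_of_mapsTo hKm hKc hwK)

lemma chainFromIn_trans {S : Set X} {δ : ℝ} {a b e : X}
    (h1 : ChainFromIn f S δ a b) (h2 : ChainFromIn f S δ b e) : ChainFromIn f S δ a e := by
  obtain ⟨k₁, hk₁, c₁, hc₁0, hc₁k, hc₁mem, hc₁gap⟩ := h1
  obtain ⟨k₂, hk₂, c₂, hc₂0, hc₂k, hc₂mem, hc₂gap⟩ := h2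
  refine ⟨k₁ + k₂, by omega, fun i => if i < k₁ then c₁ i else c₂ (i - k₁), ?_, ?_, ?_, ?_⟩
  · simp only [if_pos (show 0 < k₁ by omega)]; exact hc₁0
  · simp only [if_neg (show ¬ k₁ + k₂ < k₁ by omega)]
    rw [show k₁ + k₂ - k₁ = k₂ by omega]; exact hc₂k
  · intro i hi
    by_cases hik : i < k₁
    · simpa only [if_pos hik] using hc₁mem i hik.le
    · simp only [if_neg hik]; exact hc₂mem _ (by omega)
  · intro i hi
    by_cases hik : i < k₁
    · by_cases hik1 : i + 1 < k₁
      · simpa only [if_pos hik, if_pos hik1] using hc₁gap i hik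
      · have hie : i + 1 = k₁ := by omega
        simp only [if_pos hik, if_neg hik1]
        rw [show i + 1 - k₁ = 0 by omega, hc₂0, ← hc₁k, ← hie]
        exact hc₁gap i hik
    · simp only [if_neg hik, if_neg (show ¬ i + 1 < k₁ by omega)]
      rw [show i + 1 - k₁ = (i - k₁) + 1 by omega]
      exact hc₂gap _ (by omega)

lemma rev_step (hf : Continuous f) {a b : X} (haM : IsMinimalPoint f a)
    (hbM : IsMinimalPoint f b) {δ₀ : ℝ} (hδ₀ : 0 < δ₀)
    (hjump : dist (f b) (f^[2] a) ≤ δ₀) :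
    ChainFromIn f (MinimalPoints f) δ₀ b a := by
  obtain ⟨T, hT3, hTd⟩ := minimal_recur hf haM hδ₀ 3
  refine ⟨T - 1, by omega,
    fun j => if j = 0 then b else if j < T - 1 then f^[j + 1] a else a, ?_, ?_, ?_, ?_⟩
  · simp
  · simp only [if_neg (show T - 1 ≠ 0 by omega), if_neg (lt_irrefl (T - 1))]
  · intro i hi
    by_cases h0 : i = 0
    · simp only [h0, if_pos rfl]; exact hbM
    · by_cases hlt : i < T - 1
      · simp only [if_neg h0, if_pos hlt]; exact isMinimalPoint_iterate hf haM _
      · simp only [if_neg h0, if_neg hlt]; exact haM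
  · intro i hi
    by_cases h0 : i = 0
    · subst h0
      simp only [if_pos rfl, if_neg (one_ne_zero), if_pos (show 1 < T - 1 by omega)]
      exact hjump
    · by_cases hlt : i + 1 < T - 1
      · simp only [if_neg h0, if_pos (show i < T - 1 by omega),
          if_neg (show i + 1 ≠ 0 by omega), if_pos hlt]
        rw [show f (f^[i + 1] a) = f^[i + 1 + 1] a from (Function.iterate_succ_apply' f (i + 1) a).symm]
        simp [hδ₀.le]
      · have hie : i + 1 = T - 1 := by omega
        simp only [if_neg h0, if_pos (show i < T - 1 by omega),
          if_neg (show i + 1 ≠ 0 by omega), if_neg (show ¬ i + 1 < T - 1 by omega)]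
        rw [show f (f^[i + 1] a) = f^[i + 1 + 1] a from (Function.iterate_succ_apply' f (i + 1) a).symm]
        rw [show i + 1 + 1 = T by omega]
        exact hTd

end AuxLemmas

/-- shadowing around closure(M(f)) implies shadowing of the restriction. -/
theorem shadowing_around_closure_minimal_implies_restricted_shadowing
    [CompactSpace X] (f : X → X) (hf : Continuous f)
    (h : ∀ ε > 0, ∃ δ > 0, ∀ x : ℕ → X, (∀ i, x i ∈ closure (MinimalPoints f)) →
      IsPseudoOrbit f δ x → ∃ y, Shadows f ε x y) :
    ∀ ε > 0, ∃ δ > 0, ∀ x : ℕ → X, (∀ i, x i ∈ closure (MinimalPoints f)) →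
      IsPseudoOrbit f δ x → ∃ y ∈ closure (MinimalPoints f), Shadows f ε x y := by
  intro ε hε
  obtain ⟨δ₀, hδ₀, hsh⟩ := h (ε / 2) (by positivity)
  have hufc : UniformContinuous f := CompactSpace.uniformContinuous_of_continuous hf
  obtain ⟨θ₁, hθ₁, hθ₁p⟩ := Metric.uniformContinuous_iff.mp hufc δ₀ hδ₀
  set δ₁ := min δ₀ (θ₁ / 2) with hδ₁def
  have hδ₁ : 0 < δ₁ := lt_min hδ₀ (by positivity)
  obtain ⟨θ₂, hθ₂, hθ₂p⟩ := Metric.uniformContinuous_iff.mp hufc (δ₁ / 4) (by positivity)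
  set β := min (θ₂ / 2) (min (δ₁ / 4) (ε / 2)) with hβdef
  have hβ : 0 < β := by
    apply lt_min (by positivity) (lt_min (by positivity) (by positivity))
  refine ⟨δ₁ / 2, by positivity, ?_⟩
  intro x hxΛ hxpo
  -- choose minimal approximants
  have hch : ∀ i : ℕ, ∃ mi, mi ∈ MinimalPoints f ∧ dist (x i) mi < β := by
    intro i
    have hx' := hxΛ i
    rw [Metric.mem_closure_iff] at hx'
    obtain ⟨mi, hmi, hd⟩ := hx' β hβ
    exact ⟨mi, hmi, hd⟩
  choose m hmM hmd using hch
  have hβθ₂ : β < θ₂ := by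
    calc β ≤ θ₂ / 2 := min_le_left _ _
    _ < θ₂ := by linarith
  have hβδ₁ : β ≤ δ₁ / 4 := le_trans (min_le_right _ _) (min_le_left _ _)
  have hβε : β ≤ ε / 2 := le_trans (min_le_right _ _) (min_le_right _ _)
  have hδ₁δ₀ : δ₁ ≤ δ₀ := min_le_left _ _
  have hδ₁θ₁ : δ₁ < θ₁ := by
    calc δ₁ ≤ θ₁ / 2 := min_le_right _ _
    _ < θ₁ := by linarith
  have hgap : ∀ i, dist (f (m i)) (m (i + 1)) ≤ δ₁ := by
    intro i
    have h1 : dist (f (m i)) (f (x i)) < δ₁ / 4 := by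
      apply hθ₂p
      rw [dist_comm]
      exact lt_trans (hmd i) hβθ₂
    have h2 : dist (f (x i)) (x (i + 1)) ≤ δ₁ / 2 := hxpo i
    have h3 : dist (x (i + 1)) (m (i + 1)) < β := hmd (i + 1)
    calc dist (f (m i)) (m (i + 1))
        ≤ dist (f (m i)) (f (x i)) + dist (f (x i)) (x (i + 1))
          + dist (x (i + 1)) (m (i + 1)) := dist_triangle4 _ _ _ _
    _ ≤ δ₁ / 4 + δ₁ / 2 + δ₁ / 4 := by
        have := hβδ₁; linarith
    _ = δ₁ := by ring
  -- Step A : finite shadowing by a minimal point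
  have hstep : ∀ n : ℕ, ∃ w, w ∈ MinimalPoints f ∧ ∀ i ≤ n, dist (x i) (f^[i] w) ≤ ε := by
    intro n
    set N := max n 1 with hNdef
    have hN1 : 1 ≤ N := le_max_right n 1
    have hrev : ∀ i : ℕ, ChainFromIn f (MinimalPoints f) δ₀ (m (i + 1)) (m i) := by
      intro i
      apply rev_step hf (hmM i) (hmM (i + 1)) hδ₀
      have h1 : dist (m (i + 1)) (f (m i)) < θ₁ := by
        rw [dist_comm]
        exact lt_of_le_of_lt (hgap i) hδ₁θ₁
      have h2 := hθ₁p h1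
      rw [show f (f (m i)) = f^[2] (m i) by
        rw [Function.iterate_succ_apply', Function.iterate_one]] at h2
      exact h2.le
    have hback : ∀ j : ℕ, ChainFromIn f (MinimalPoints f) δ₀ (m (j + 1)) (m 0) := by
      intro j
      induction j with
      | zero => exact hrev 0
      | succ j ih => exact chainFromIn_trans (hrev (j + 1)) ih
    have hbackN := hback (N - 1)
    rw [show N - 1 + 1 = N by omega] at hbackN
    obtain ⟨k₂, hk₂, c₂, hc₂0, hc₂k, hc₂mem, hc₂gap⟩ := hbackN
    set k := N + k₂ with hkdef
    set c : ℕ → X := fun i => if i < N then m i else c₂ (i - N) with hcdef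
    have hchead : ∀ i ≤ N, c i = m i := by
      intro i hi
      by_cases hiN : i < N
      · simp only [hcdef, if_pos hiN]
      · have : i = N := by omega
        simp only [hcdef, if_neg hiN, this, Nat.sub_self, hc₂0, ite_self]
    have hcmem : ∀ i ≤ k, c i ∈ MinimalPoints f := by
      intro i hi
      by_cases hiN : i < N
      · simp only [hcdef, if_pos hiN]; exact hmM i
      · simp only [hcdef, if_neg hiN]; exact hc₂mem _ (by omega)
    have hck : c k = m 0 := by
      simp only [hcdef, if_neg (show ¬ N + k₂ < N by omega),
        show N + k₂ - N = k₂ by omega]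
      rw [if_neg (show ¬ k < N by omega), show k - N = k₂ by omega]
      exact hc₂k
    have hcgap : ∀ i < k, dist (f (c i)) (c (i + 1)) ≤ δ₀ := by
      intro i hi
      by_cases hiN : i < N
      · rw [hchead i hiN.le, hchead (i + 1) (by omega)]
        exact le_trans (hgap i) hδ₁δ₀
      · have h1 : c i = c₂ (i - N) := by simp only [hcdef, if_neg hiN]
        have h2 : c (i + 1) = c₂ (i - N + 1) := by
          simp only [hcdef, if_neg (show ¬ i + 1 < N by omega),
            show i + 1 - N = i - N + 1 by omega]
        rw [h1, h2]
        exact hc₂gap _ (by omega)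
    have hk2 : 2 ≤ k := by omega
    have hk0 : 0 < k := by omega
    set ξ : ℕ → X := fun i => c (i % k) with hξdef
    have hξsucc : ∀ i, ξ (i + 1) = c (i % k + 1) := by
      intro i
      have hmod : i % k < k := Nat.mod_lt i hk0
      have h1k : (1 : ℕ) % k = 1 := Nat.mod_eq_of_lt (by omega)
      by_cases hlt : i % k + 1 < k
      · have : (i + 1) % k = i % k + 1 := by
          rw [Nat.add_mod, h1k, Nat.mod_eq_of_lt hlt]
        simp only [hξdef, this]
      · have he : i % k + 1 = k := by omega
        have h0 : (i + 1) % k = 0 := by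
          rw [Nat.add_mod, h1k, he, Nat.mod_self]
        simp only [hξdef, h0, he, hck]
        rw [hchead 0 (by omega)]
    have hξpo : IsPseudoOrbit f δ₀ ξ := by
      intro i
      rw [hξsucc i]
      exact hcgap (i % k) (Nat.mod_lt i hk0)
    have hξmem : ∀ i, ξ i ∈ closure (MinimalPoints f) := fun i =>
      subset_closure (hcmem _ (Nat.mod_lt i hk0).le)
    obtain ⟨y, hy⟩ := hsh ξ hξmem hξpo
    set Kset : Set X := ⋂ i : ℕ, {w | dist (ξ i) (f^[i] w) ≤ ε / 2} with hKdef
    have hyK : y ∈ Kset := Set.mem_iInter.mpr hy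
    have hKc : IsClosed Kset :=
      isClosed_iInter fun i => isClosed_le (continuous_const.dist (hf.iterate i)) continuous_const
    have hKm : Set.MapsTo (f^[k]) Kset Kset := by
      intro u hu
      rw [Set.mem_iInter] at hu ⊢
      intro i
      have h1 : ξ (i + k) = ξ i := by simp only [hξdef, Nat.add_mod_right]
      have h2 := hu (i + k)
      simp only [Set.mem_setOf_eq] at h2
      rw [h1, Function.iterate_add_apply] at h2
      exact h2
    obtain ⟨w, hwK, hwmin⟩ := exists_minimalPoint_mem (hf.iterate k) ⟨y, hyK⟩ hKc hKm
    have hwM : IsMinimalPoint f w := isMinimalPoint_of_iterate_s3 hf (by omega) hwmin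
    refine ⟨w, hwM, fun i hi => ?_⟩
    have hiN : i ≤ N := le_trans hi (le_max_left n 1)
    have hik : i < k := by omega
    have hξi : ξ i = m i := by
      simp only [hξdef, Nat.mod_eq_of_lt hik]
      exact hchead i hiN
    have h3 := Set.mem_iInter.mp hwK i
    rw [hξi] at h3
    calc dist (x i) (f^[i] w) ≤ dist (x i) (m i) + dist (m i) (f^[i] w) := dist_triangle _ _ _
    _ ≤ β + ε / 2 := add_le_add (hmd i).le h3
    _ ≤ ε / 2 + ε / 2 := by linarith
    _ = ε := by ring
  -- Step B : compactness limit
  choose w hwM hwd using hstep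
  have hcomp : IsCompact (closure (MinimalPoints f)) := isClosed_closure.isCompact
  obtain ⟨y, hyΛ, φ, hφ, hconv⟩ := hcomp.tendsto_subseq (fun n => subset_closure (hwM n))
  refine ⟨y, hyΛ, fun i => ?_⟩
  have hc : Filter.Tendsto (fun j => dist (x i) (f^[i] (w (φ j)))) atTop
      (nhds (dist (x i) (f^[i] y))) :=
    tendsto_const_nhds.dist (((hf.iterate i).tendsto y).comp hconv)
  apply le_of_tendsto hc
  filter_upwards [Filter.eventually_ge_atTop i] with j hj
  exact hwd (φ j) i (le_trans hj (hφ.le_apply))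
end

section
/- Let f be an equicontinuous homeomorphism of a compact metric space X. Then f has the limit shadowing property if and only if f has the shadowing property, and each is equivalent to X being totally disconnected (dim X = 0). -/
open Filter Topology

variable {X : Type*} [MetricSpace X]

set_option linter.unusedSectionVars false

section ShadowAux

open Filter Topology

variable {X : Type*} [MetricSpace X] [CompactSpace X]

noncomputable def DD (f : X → X) (x y : X) : ℝ := ⨆ n : ℕ, dist (f^[n] x) (f^[n] y)

lemma bddD (f : X → X) (x y : X) :
    BddAbove (Set.range fun n : ℕ => dist (f^[n] x) (f^[n] y)) := by
  obtain ⟨C, hC⟩ := Metric.isBounded_iff.1 (isCompact_univ (X := X)).isBounded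
  exact ⟨C, by rintro _ ⟨n, rfl⟩; exact hC trivial trivial⟩

lemma le_D (f : X → X) (x y : X) (n : ℕ) : dist (f^[n] x) (f^[n] y) ≤ DD f x y :=
  le_ciSup (bddD f x y) n

lemma dist_le_D (f : X → X) (x y : X) : dist x y ≤ DD f x y := by
  simpa using le_D f x y 0

lemma D_le (f : X → X) {x y : X} {c : ℝ} (h : ∀ n, dist (f^[n] x) (f^[n] y) ≤ c) :
    DD f x y ≤ c := ciSup_le h

lemma D_nonneg (f : X → X) (x y : X) : 0 ≤ DD f x y :=
  dist_nonneg.trans (dist_le_D f x y)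

lemma D_self (f : X → X) (x : X) : DD f x x = 0 :=
  le_antisymm (D_le f (by simp)) (D_nonneg f x x)

lemma D_symm (f : X → X) (x y : X) : DD f x y = DD f y x := by
  unfold DD; simp [dist_comm]

lemma D_triangle (f : X → X) (x y z : X) : DD f x z ≤ DD f x y + DD f y z :=
  D_le f fun n => (dist_triangle _ (f^[n] y) _).trans
    (add_le_add (le_D f x y n) (le_D f y z n))

lemma eq_of_D_le_zero {f : X → X} {x y : X} (h : DD f x y ≤ 0) : x = y :=
  dist_le_zero.1 ((dist_le_D f x y).trans h)

lemma le_add_eps {a b : ℝ} (h : ∀ ε > 0, a ≤ b + ε) : a ≤ b := by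
  by_contra hc; push_neg at hc
  have := h ((a - b)/2) (by linarith); linarith

lemma eq_of_forall_D_le {f : X → X} {x y : X} (h : ∀ ε > 0, DD f x y ≤ ε) : x = y :=
  eq_of_D_le_zero (le_add_eps fun ε hε => by simpa using h ε hε)

lemma D_mod {f : X → X} (he : EquicontMap f) : ∀ ε > 0, ∃ δ > 0, ∀ x y : X,
    dist x y ≤ δ → DD f x y ≤ ε := fun ε hε => by
  obtain ⟨δ, hδ, h⟩ := he ε hε
  exact ⟨δ, hδ, fun x y hxy => D_le f (h x y hxy)⟩

lemma D_map_le (f : X → X) (x y : X) : DD f (f x) (f y) ≤ DD f x y :=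
  D_le f fun n => by simpa only [Function.iterate_succ_apply] using le_D f x y (n+1)

lemma D_iterate_le (f : X → X) (x y : X) (n : ℕ) : DD f (f^[n] x) (f^[n] y) ≤ DD f x y := by
  induction n with
  | zero => simp
  | succ n ih =>
    rw [Function.iterate_succ_apply' f n x, Function.iterate_succ_apply' f n y]
    exact (D_map_le f _ _).trans ih

lemma iterate_right_inverse {f g : X → X} (hg : ∀ z, f (g z) = z) (m : ℕ) (z : X) :
    f^[m] (g^[m] z) = z := by
  induction m with
  | zero => rfl
  | succ m ih =>
    rw [Function.iterate_succ_apply f, Function.iterate_succ_apply' g, hg]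
    exact ih

lemma iterate_right_inverse' {f g : X → X} (hg : ∀ z, f (g z) = z) {m i : ℕ} (h : m ≤ i)
    (z : X) : f^[i] (g^[m] z) = f^[i - m] z := by
  conv_lhs => rw [← Nat.sub_add_cancel h]
  rw [Function.iterate_add_apply, iterate_right_inverse hg]

lemma recurrence {f : X → X} (hs : Function.Surjective f) (he : EquicontMap f)
    (x y : X) {ε : ℝ} (hε : 0 < ε) :
    ∃ N, 1 ≤ N ∧ dist (f^[N] x) x ≤ ε ∧ dist (f^[N] y) y ≤ ε := by
  obtain ⟨g, hg⟩ := hs.hasRightInverse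
  obtain ⟨δ, hδ, hmod⟩ := he ε hε
  set u : ℕ → X × X := fun m => (g^[m] x, g^[m] y) with hu
  obtain ⟨p, φ, hφ, hconv⟩ := CompactSpace.tendsto_subseq u
  obtain ⟨K, hK⟩ := (Metric.tendsto_atTop.1 hconv) (δ/2) (by positivity)
  have h1 := hK K le_rfl
  have h2 := hK (K+1) (Nat.le_succ K)
  have hlt : φ K < φ (K+1) := hφ (Nat.lt_succ_self K)
  have hd : dist (u (φ (K+1))) (u (φ K)) ≤ δ := by
    calc dist (u (φ (K+1))) (u (φ K)) ≤ dist (u (φ (K+1))) p + dist (u (φ K)) p :=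
          dist_triangle_right _ _ _
    _ ≤ δ/2 + δ/2 := add_le_add h2.le h1.le
    _ = δ := by ring
  simp only [hu, Prod.dist_eq, Function.comp] at hd
  have hdx : dist (g^[φ (K+1)] x) (g^[φ K] x) ≤ δ := le_trans (le_max_left _ _) hd
  have hdy : dist (g^[φ (K+1)] y) (g^[φ K] y) ≤ δ := le_trans (le_max_right _ _) hd
  refine ⟨φ (K+1) - φ K, by omega, ?_, ?_⟩
  · have hx := hmod _ _ hdx (φ (K+1))
    rw [iterate_right_inverse hg, iterate_right_inverse' hg hlt.le] at hx
    rw [dist_comm]; exact hx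
  · have hy := hmod _ _ hdy (φ (K+1))
    rw [iterate_right_inverse hg, iterate_right_inverse' hg hlt.le] at hy
    rw [dist_comm]; exact hy

lemma D_map_eq {f : X → X} (hsur : Function.Surjective f) (he : EquicontMap f) (x y : X) :
    DD f (f x) (f y) = DD f x y := by
  refine le_antisymm (D_map_le f x y) (le_add_eps fun ε hε => ?_)
  obtain ⟨δ, hδ, hmod⟩ := D_mod he (ε/2) (by positivity)
  obtain ⟨N, hN1, hx, hy⟩ := recurrence hsur he x y hδ
  have h1 : DD f x (f^[N] x) ≤ ε/2 := by rw [D_symm]; exact hmod _ _ hx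
  have h2 : DD f (f^[N] y) y ≤ ε/2 := hmod _ _ hy
  have h3 : DD f (f^[N] x) (f^[N] y) ≤ DD f (f x) (f y) := by
    obtain ⟨M, rfl⟩ : ∃ M, N = M + 1 := ⟨N - 1, by omega⟩
    rw [Function.iterate_succ_apply, Function.iterate_succ_apply]
    exact D_iterate_le f _ _ M
  have h4 := (D_triangle f x (f^[N] x) y).trans
    (add_le_add h1 ((D_triangle f (f^[N] x) (f^[N] y) y).trans (add_le_add h3 h2)))
  linarith

lemma D_iterate_eq {f : X → X} (hsur : Function.Surjective f) (he : EquicontMap f)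
    (x y : X) (n : ℕ) : DD f (f^[n] x) (f^[n] y) = DD f x y := by
  induction n with
  | zero => rfl
  | succ n ih =>
    rw [Function.iterate_succ_apply' f n x, Function.iterate_succ_apply' f n y,
      D_map_eq hsur he, ih]

def ChainD (f : X → X) (r : ℝ) (a b : X) : Prop :=
  ∃ c : ℕ → X, ∃ k : ℕ, c 0 = a ∧ (∀ i, k ≤ i → c i = b) ∧ ∀ i, DD f (c i) (c (i+1)) ≤ r

lemma ChainD.refl (f : X → X) {r : ℝ} (hr : 0 ≤ r) (a : X) : ChainD f r a a :=
  ⟨fun _ => a, 0, rfl, fun _ _ => rfl, fun _ => by rw [D_self]; exact hr⟩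

lemma ChainD.single {f : X → X} {r : ℝ} {a b : X} (h : DD f a b ≤ r) : ChainD f r a b := by
  have hr : 0 ≤ r := (D_nonneg f a b).trans h
  refine ⟨fun i => if i = 0 then a else b, 1, by simp, ?_, ?_⟩
  · intro i hi
    simp [Nat.one_le_iff_ne_zero.mp hi]
  · intro i
    show DD f (if i = 0 then a else b) (if i + 1 = 0 then a else b) ≤ r
    rcases Nat.eq_zero_or_pos i with rfl | hi
    · simpa using h
    · rw [if_neg hi.ne', if_neg (Nat.succ_ne_zero i), D_self]
      exact hr

lemma ChainD.append {f : X → X} {r : ℝ} {a b c : X} (h1 : ChainD f r a b)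
    (h2 : ChainD f r b c) : ChainD f r a c := by
  obtain ⟨c1, k1, hc10, hc1k, hs1⟩ := h1
  obtain ⟨c2, k2, hc20, hc2k, hs2⟩ := h2
  refine ⟨fun i => if i ≤ k1 then c1 i else c2 (i - k1), k1 + k2, ?_, ?_, ?_⟩
  · show (if 0 ≤ k1 then c1 0 else c2 (0 - k1)) = a
    rw [if_pos (Nat.zero_le _)]; exact hc10
  · intro i hi
    show (if i ≤ k1 then c1 i else c2 (i - k1)) = c
    by_cases h : i ≤ k1
    · have hik : i = k1 ∧ k2 = 0 := by omega
      rw [if_pos h, hik.1, hc1k k1 le_rfl, ← hc20]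
      exact hc2k 0 (by omega)
    · rw [if_neg h]
      exact hc2k (i - k1) (by omega)
  · intro i
    show DD f (if i ≤ k1 then c1 i else c2 (i - k1))
        (if i + 1 ≤ k1 then c1 (i+1) else c2 (i + 1 - k1)) ≤ r
    by_cases h : i + 1 ≤ k1
    · rw [if_pos (by omega : i ≤ k1), if_pos h]; exact hs1 i
    · by_cases h' : i ≤ k1
      · have hik : i = k1 := by omega
        subst hik
        rw [if_pos h', if_neg h, hc1k i le_rfl, ← hc20,
          (by omega : i + 1 - i = 0 + 1)]
        exact hs2 0
      · rw [if_neg h', if_neg h, (by omega : i + 1 - k1 = (i - k1) + 1)]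
        exact hs2 (i - k1)

lemma ChainD.symm {f : X → X} {r : ℝ} {a b : X} (h : ChainD f r a b) : ChainD f r b a := by
  obtain ⟨c, k, h0, hk, hs⟩ := h
  have hr : 0 ≤ r := (D_nonneg _ _ _).trans (hs 0)
  refine ⟨fun i => c (k - i), k, ?_, ?_, ?_⟩
  · show c (k - 0) = b
    rw [Nat.sub_zero]; exact hk k le_rfl
  · intro i hi
    show c (k - i) = a
    rw [Nat.sub_eq_zero_of_le hi]; exact h0
  · intro i
    show DD f (c (k - i)) (c (k - (i+1))) ≤ r
    rcases Nat.lt_or_ge i k with hik | hik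
    · rw [D_symm, (by omega : k - i = (k - (i+1)) + 1)]
      exact hs _
    · rw [Nat.sub_eq_zero_of_le hik, Nat.sub_eq_zero_of_le (by omega), D_self]
      exact hr

lemma ChainD.mono {f : X → X} {r r' : ℝ} {a b : X} (h : ChainD f r a b) (hrr : r ≤ r') :
    ChainD f r' a b := by
  obtain ⟨c, k, h0, hk, hs⟩ := h
  exact ⟨c, k, h0, hk, fun i => (hs i).trans hrr⟩

lemma ChainD.map {f : X → X} {r : ℝ} {a b : X} (h : ChainD f r a b) :
    ChainD f r (f a) (f b) := by
  obtain ⟨c, k, h0, hk, hs⟩ := h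
  exact ⟨fun i => f (c i), k, by simp only []; rw [h0], fun i hi => by simp only []; rw [hk i hi],
    fun i => (D_map_le f _ _).trans (hs i)⟩

lemma chain_of_preconnected {f : X → X} (he : EquicontMap f) {s : Set X}
    (hs : IsPreconnected s) {a b : X} (ha : a ∈ s) (hb : b ∈ s) {r : ℝ} (hr : 0 < r) :
    ChainD f r a b := by
  obtain ⟨δ, hδ, hmod⟩ := D_mod he r hr
  by_contra hnb
  set T : Set X := {z | z ∈ s ∧ ChainD f r a z} with hT
  set u : Set X := ⋃ t ∈ T, Metric.ball t δ with hu
  set v : Set X := ⋃ t ∈ s \ T, Metric.ball t δ with hv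
  have hu_open : IsOpen u := isOpen_biUnion fun _ _ => Metric.isOpen_ball
  have hv_open : IsOpen v := isOpen_biUnion fun _ _ => Metric.isOpen_ball
  have hsub : s ⊆ u ∪ v := by
    intro z hz
    by_cases h : z ∈ T
    · exact Or.inl (Set.mem_biUnion h (Metric.mem_ball_self hδ))
    · exact Or.inr (Set.mem_biUnion ⟨hz, h⟩ (Metric.mem_ball_self hδ))
  have haT : a ∈ T := ⟨ha, ChainD.refl f hr.le a⟩
  have hbT : b ∈ s \ T := ⟨hb, fun h => hnb h.2⟩
  obtain ⟨z, hzs, hzu, hzv⟩ := hs u v hu_open hv_open hsub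
    ⟨a, ha, Set.mem_biUnion haT (Metric.mem_ball_self hδ)⟩
    ⟨b, hb, Set.mem_biUnion hbT (Metric.mem_ball_self hδ)⟩
  obtain ⟨t, htT, hzt⟩ := Set.mem_iUnion₂.1 hzu
  obtain ⟨t', ht', hzt'⟩ := Set.mem_iUnion₂.1 hzv
  have h1 : DD f t z ≤ r := hmod t z (by rw [dist_comm]; exact (Metric.mem_ball.1 hzt).le)
  have h2 : DD f z t' ≤ r := hmod z t' (Metric.mem_ball.1 hzt').le
  have ht'T : t' ∈ T := ⟨ht'.1, (htT.2.append (ChainD.single h1)).append (ChainD.single h2)⟩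
  exact ht'.2 ht'T

lemma clopen_gap {Z : Set X} (hZ : IsClopen Z) :
    ∃ s > 0, ∀ p ∈ Z, ∀ q : X, dist p q ≤ s → q ∈ Z := by
  rcases Set.eq_empty_or_nonempty Zᶜ with hc | hc
  · refine ⟨1, one_pos, fun p _ q _ => ?_⟩
    have := Set.eq_empty_iff_forall_notMem.1 hc q
    simpa using this
  rcases Set.eq_empty_or_nonempty Z with hZe | hZn
  · exact ⟨1, one_pos, fun p hp => absurd hp (by simp [hZe])⟩
  have hZc : IsCompact Z := hZ.1.isCompact
  have hcont : ContinuousOn (fun z => Metric.infDist z Zᶜ) Z :=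
    (Metric.continuous_infDist_pt _).continuousOn
  obtain ⟨z0, hz0Z, hz0min⟩ := hZc.exists_isMinOn hZn hcont
  have hpos : 0 < Metric.infDist z0 Zᶜ :=
    ((hZ.2.isClosed_compl).notMem_iff_infDist_pos hc).1 (by simpa using hz0Z)
  refine ⟨Metric.infDist z0 Zᶜ / 2, by positivity, fun p hp q hq => ?_⟩
  by_contra hqZ
  have h1 : Metric.infDist p Zᶜ ≤ dist p q := Metric.infDist_le_dist_of_mem hqZ
  have h2 : Metric.infDist z0 Zᶜ ≤ Metric.infDist p Zᶜ := hz0min hp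
  linarith

lemma ChainD.mem_clopen {f : X → X} {Z : Set X} {s : ℝ}
    (hstay : ∀ p ∈ Z, ∀ q : X, dist p q ≤ s → q ∈ Z) {a b : X} (haZ : a ∈ Z)
    (h : ChainD f s a b) : b ∈ Z := by
  obtain ⟨c, k, h0, hk, hsteps⟩ := h
  have hmem : ∀ i, c i ∈ Z := by
    intro i
    induction i with
    | zero => rw [h0]; exact haZ
    | succ i ih => exact hstay _ ih _ ((dist_le_D f _ _).trans (hsteps i))
  rw [← hk k le_rfl]; exact hmem k

lemma keyTD {f : X → X} (he : EquicontMap f) [TotallyDisconnectedSpace X] {ε : ℝ}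
    (hε : 0 < ε) : ∃ r > 0, ∀ x y : X, ChainD f r x y → DD f x y ≤ ε := by
  by_contra hcon
  push_neg at hcon
  have hsel : ∀ n : ℕ, ∃ p : X × X, ChainD f (1/((n:ℝ)+1)) p.1 p.2 ∧ ε < DD f p.1 p.2 := by
    intro n
    obtain ⟨x, y, h1, h2⟩ := hcon (1/((n:ℝ)+1)) (by positivity)
    exact ⟨(x, y), h1, h2⟩
  choose w hw1 hw2 using hsel
  obtain ⟨p, φ, hφ, hconv⟩ := CompactSpace.tendsto_subseq w
  have hchain : ∀ s > 0, ChainD f s p.1 p.2 := by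
    intro s hspos
    obtain ⟨δ, hδ, hmod⟩ := D_mod he s hspos
    obtain ⟨M, hM⟩ := exists_nat_one_div_lt hspos
    obtain ⟨K, hK⟩ := (Metric.tendsto_atTop.1 hconv) δ hδ
    set k := max K M with hk
    have h1 := hK k (le_max_left _ _)
    have hx : dist p.1 ((w ∘ φ) k).1 ≤ δ := by
      rw [dist_comm]
      exact le_trans (by rw [Prod.dist_eq]; exact le_max_left _ _) h1.le
    have hy2 : dist ((w ∘ φ) k).2 p.2 ≤ δ :=
      le_trans (by rw [Prod.dist_eq]; exact le_max_right _ _) h1.le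
    have hsmall : 1/((φ k : ℝ)+1) ≤ s := by
      have h2 : (M:ℝ) ≤ φ k := by
        exact_mod_cast le_trans (le_max_right K M) hφ.le_apply
      have h3 : 1/((φ k:ℝ)+1) ≤ 1/((M:ℝ)+1) :=
        one_div_le_one_div_of_le (by positivity) (by linarith)
      linarith
    exact ((ChainD.single (hmod _ _ hx)).append (((hw1 (φ k)).mono hsmall))).append
      (ChainD.single (hmod _ _ hy2))
  have hpq : p.1 = p.2 := by
    have hcc : p.2 ∈ connectedComponent p.1 := by
      rw [connectedComponent_eq_iInter_isClopen]
      refine Set.mem_iInter.2 fun Z => ?_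
      obtain ⟨sZ, hsZ, hstay⟩ := clopen_gap Z.2.1
      exact (hchain sZ hsZ).mem_clopen hstay Z.2.2
    rw [totallyDisconnectedSpace_iff_connectedComponent_singleton.1 ‹_› p.1] at hcc
    exact (Set.mem_singleton_iff.1 hcc).symm
  obtain ⟨δ, hδ, hmod⟩ := D_mod he (ε/2) (by positivity)
  obtain ⟨K, hK⟩ := (Metric.tendsto_atTop.1 hconv) δ hδ
  have h1 := hK K le_rfl
  have hx : dist ((w ∘ φ) K).1 p.1 ≤ δ :=
    le_trans (by rw [Prod.dist_eq]; exact le_max_left _ _) h1.le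
  have hy : dist p.2 ((w ∘ φ) K).2 ≤ δ := by
    rw [dist_comm]
    exact le_trans (by rw [Prod.dist_eq]; exact le_max_right _ _) h1.le
  have hfin : DD f ((w ∘ φ) K).1 ((w ∘ φ) K).2 ≤ ε := by
    calc DD f ((w ∘ φ) K).1 ((w ∘ φ) K).2
        ≤ DD f ((w ∘ φ) K).1 p.1 + DD f p.1 ((w ∘ φ) K).2 := D_triangle ..
      _ = DD f ((w ∘ φ) K).1 p.1 + DD f p.2 ((w ∘ φ) K).2 := by rw [hpq]
      _ ≤ ε/2 + ε/2 := add_le_add (hmod _ _ hx) (hmod _ _ hy)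
      _ = ε := by ring
  exact absurd hfin (not_le.2 (hw2 (φ K)))

lemma chain_of_pseudo {f : X → X} {r : ℝ} (hr : 0 ≤ r) {x : ℕ → X}
    (hx : ∀ i, DD f (f (x i)) (x (i+1)) ≤ r) (i : ℕ) :
    ChainD f r (f^[i] (x 0)) (x i) := by
  induction i with
  | zero => exact ChainD.refl f hr _
  | succ i ih =>
    have h1 : ChainD f r (f^[i+1] (x 0)) (f (x i)) := by
      rw [Function.iterate_succ_apply']
      exact ih.map
    exact h1.append (ChainD.single (hx i))

lemma shadowing_of_TD {f : X → X} (he : EquicontMap f) [TotallyDisconnectedSpace X] :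
    HasShadowing f := by
  intro ε hε
  obtain ⟨r, hr, hkey⟩ := keyTD he hε
  obtain ⟨δ, hδ, hmod⟩ := D_mod he r hr
  refine ⟨δ, hδ, fun x hx => ⟨x 0, fun i => ?_⟩⟩
  have hD : ∀ i, DD f (f (x i)) (x (i+1)) ≤ r := fun i => hmod _ _ (hx i)
  have h1 := hkey _ _ (chain_of_pseudo hr.le hD i)
  calc dist (x i) (f^[i] (x 0)) ≤ DD f (x i) (f^[i] (x 0)) := dist_le_D ..
    _ = DD f (f^[i] (x 0)) (x i) := D_symm ..
    _ ≤ ε := h1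

lemma limitShadowing_of_TD {f : X → X} (hsur : Function.Surjective f) (he : EquicontMap f)
    [TotallyDisconnectedSpace X] : HasLimitShadowing f := by
  obtain ⟨g, hg⟩ := hsur.hasRightInverse
  intro x hx
  have key : ∀ m : ℕ, ∃ r > 0, ∀ a b : X, ChainD f r a b → DD f a b ≤ 1/((m:ℝ)+1) :=
    fun m => keyTD he (by positivity)
  choose r hr hkey using key
  have hmods : ∀ m : ℕ, ∃ δ > 0, ∀ a b : X, dist a b ≤ δ → DD f a b ≤ r m :=
    fun m => D_mod he (r m) (hr m)
  choose δ hδ hm using hmods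
  have hNs : ∀ m : ℕ, ∃ N, ∀ i, N ≤ i → dist (f (x i)) (x (i+1)) ≤ δ m := by
    intro m
    obtain ⟨N, hN⟩ := (Metric.tendsto_atTop.1 hx) (δ m) (hδ m)
    refine ⟨N, fun i hi => ?_⟩
    have h := hN i hi
    rw [Real.dist_0_eq_abs, abs_of_nonneg dist_nonneg] at h
    exact h.le
  choose N hNs using hNs
  set y : ℕ → X := fun m => g^[N m] (x (N m)) with hy
  have hshad : ∀ m, ∀ i, N m ≤ i → DD f (f^[i] (y m)) (x i) ≤ 1/((m:ℝ)+1) := by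
    intro m i hi
    have hD : ∀ j : ℕ, DD f (f (x (N m + j))) (x (N m + j + 1)) ≤ r m :=
      fun j => hm m _ _ (hNs m _ (Nat.le_add_right _ _))
    have hchain := chain_of_pseudo (hr m).le (x := fun j => x (N m + j))
      (fun j => hD j) (i - N m)
    have h1 := hkey m _ _ hchain
    simp only [Nat.add_zero] at h1
    rw [(by omega : N m + (i - N m) = i)] at h1
    have h2 : f^[i] (y m) = f^[i - N m] (x (N m)) := by
      simp only [hy]
      exact iterate_right_inverse' hg hi _
    rw [h2]
    exact h1
  have haux : ∀ n m : ℕ, n ≤ m → DD f (y n) (y m) ≤ 2/((n:ℝ)+1) := by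
    intro n m hnm
    set i := max (N n) (N m) with hi
    have h1 := hshad n i (le_max_left _ _)
    have h2 := hshad m i (le_max_right _ _)
    have h3 : DD f (f^[i] (y n)) (f^[i] (y m)) ≤ 1/((n:ℝ)+1) + 1/((m:ℝ)+1) := by
      calc DD f (f^[i] (y n)) (f^[i] (y m))
          ≤ DD f (f^[i] (y n)) (x i) + DD f (x i) (f^[i] (y m)) := D_triangle ..
        _ ≤ 1/((n:ℝ)+1) + 1/((m:ℝ)+1) := add_le_add h1 (by rw [D_symm]; exact h2)
    rw [D_iterate_eq hsur he] at h3
    have hc : ((n:ℝ)+1) ≤ ((m:ℝ)+1) := by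
      have : (n:ℝ) ≤ (m:ℝ) := Nat.cast_le.2 hnm
      linarith
    have h4 : 1/((m:ℝ)+1) ≤ 1/((n:ℝ)+1) := one_div_le_one_div_of_le (by positivity) hc
    have h5 : 1/((n:ℝ)+1) + 1/((n:ℝ)+1) = 2/((n:ℝ)+1) := by ring
    linarith
  have hb0 : Tendsto (fun m : ℕ => 2/((m:ℝ)+1)) atTop (nhds 0) := by
    have h2 := tendsto_one_div_add_atTop_nhds_zero_nat.const_mul (2:ℝ)
    simpa [mul_one_div, div_eq_mul_inv] using h2
  have hcauchy : CauchySeq y := by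
    apply cauchySeq_of_le_tendsto_0 (fun m : ℕ => 2/((m:ℝ)+1)) ?_ hb0
    intro n m M hMn hMm
    have hMbound : ∀ a b : ℕ, M ≤ a → a ≤ b → dist (y a) (y b) ≤ 2/((M:ℝ)+1) := by
      intro a b hMa hab
      have h1 := (dist_le_D f (y a) (y b)).trans (haux a b hab)
      have hc : ((M:ℝ)+1) ≤ ((a:ℝ)+1) := by
        have : (M:ℝ) ≤ (a:ℝ) := Nat.cast_le.2 hMa
        linarith
      have h2 : 2/((a:ℝ)+1) ≤ 2/((M:ℝ)+1) := by
        apply div_le_div_of_nonneg_left (by norm_num) (by positivity) hc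
      linarith
    rcases le_total n m with h | h
    · exact hMbound n m hMn h
    · rw [dist_comm]; exact hMbound m n hMm h
  obtain ⟨yl, hyl⟩ := cauchySeq_tendsto_of_complete hcauchy
  refine ⟨yl, ?_⟩
  rw [LimitShadows, Metric.tendsto_atTop]
  intro ε hε
  have hb4 : Tendsto (fun m : ℕ => 4/((m:ℝ)+1)) atTop (nhds 0) := by
    have h2 := tendsto_one_div_add_atTop_nhds_zero_nat.const_mul (4:ℝ)
    simpa [mul_one_div, div_eq_mul_inv] using h2
  obtain ⟨m, hm4⟩ := (hb4.eventually (gt_mem_nhds hε)).exists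
  obtain ⟨δ', hδ', hmod'⟩ := D_mod he (1/((m:ℝ)+1)) (by positivity)
  obtain ⟨M', hM'⟩ := (Metric.tendsto_atTop.1 hyl) δ' hδ'
  set m' := max m M' with hm'
  have h5 : DD f (y m') yl ≤ 1/((m:ℝ)+1) := hmod' _ _ (hM' m' (le_max_right _ _)).le
  have h6 : DD f (y m) yl ≤ 3/((m:ℝ)+1) := by
    have ha := haux m m' (le_max_left _ _)
    have hb := D_triangle f (y m) (y m') yl
    have hc : 2/((m:ℝ)+1) + 1/((m:ℝ)+1) = 3/((m:ℝ)+1) := by ring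
    linarith
  refine ⟨N m, fun i hi => ?_⟩
  have h8 : DD f (f^[i] (y m)) (f^[i] yl) ≤ 3/((m:ℝ)+1) := (D_iterate_le f _ _ i).trans h6
  have ha := hshad m i hi
  have hbd : dist (x i) (f^[i] (y m)) ≤ 1/((m:ℝ)+1) := by
    rw [dist_comm]; exact (dist_le_D f _ _).trans ha
  have hcd : dist (f^[i] (y m)) (f^[i] yl) ≤ 3/((m:ℝ)+1) := (dist_le_D f _ _).trans h8
  have hdd := dist_triangle (x i) (f^[i] (y m)) (f^[i] yl)
  have he4 : 1/((m:ℝ)+1) + 3/((m:ℝ)+1) = 4/((m:ℝ)+1) := by ring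
  rw [Real.dist_0_eq_abs, abs_of_nonneg dist_nonneg]
  calc dist (x i) (f^[i] yl) ≤ 4/((m:ℝ)+1) := by linarith
    _ < ε := hm4

lemma TD_of_shadowing {f : X → X} (hsur : Function.Surjective f) (he : EquicontMap f)
    (hsh : HasShadowing f) : TotallyDisconnectedSpace X := by
  refine ⟨fun t _ ht a ha b hb => ?_⟩
  have key : ∀ ε > 0, dist a b ≤ 2*ε := by
    intro ε hε
    obtain ⟨δ1, hδ1, hmod1⟩ := D_mod he ε hε
    set ε' := min ε δ1 with hε'def
    have hε' : 0 < ε' := lt_min hε hδ1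
    obtain ⟨δ, hδ, hsp⟩ := hsh ε' hε'
    obtain ⟨c, k, hc0, hck, hcs⟩ := chain_of_preconnected he ht ha hb hδ
    have hpo : IsPseudoOrbit f δ (fun i => f^[i] (c i)) := by
      intro i
      show dist (f (f^[i] (c i))) (f^[i+1] (c (i+1))) ≤ δ
      rw [← Function.iterate_succ_apply' f i (c i)]
      calc dist (f^[i+1] (c i)) (f^[i+1] (c (i+1)))
          ≤ DD f (f^[i+1] (c i)) (f^[i+1] (c (i+1))) := dist_le_D ..
        _ ≤ DD f (c i) (c (i+1)) := D_iterate_le ..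
        _ ≤ δ := hcs i
    obtain ⟨z, hz⟩ := hsp (fun i => f^[i] (c i)) hpo
    have h0 : dist a z ≤ ε := by
      have h00 := hz 0
      simp only [Function.iterate_zero_apply, hc0] at h00
      exact h00.trans (min_le_left _ _)
    have hbz : dist b z ≤ ε := by
      have hk2 : dist (f^[k] b) (f^[k] z) ≤ δ1 := by
        have h01 := hz k
        simp only [hck k le_rfl] at h01
        exact h01.trans (min_le_right _ _)
      have h02 := hmod1 _ _ hk2
      rw [D_iterate_eq hsur he] at h02
      exact (dist_le_D f b z).trans h02
    calc dist a b ≤ dist a z + dist z b := dist_triangle ..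
      _ ≤ ε + ε := add_le_add h0 (by rw [dist_comm]; exact hbz)
      _ = 2*ε := by ring
  have hab : dist a b ≤ 0 := by
    by_contra h
    push_neg at h
    have := key (dist a b / 4) (by linarith)
    linarith
  exact dist_le_zero.1 hab

lemma TD_of_limitShadowing {f : X → X} (hsur : Function.Surjective f) (he : EquicontMap f)
    (hls : HasLimitShadowing f) : TotallyDisconnectedSpace X := by
  refine ⟨fun t _ ht a ha b hb => ?_⟩
  have hchains : ∀ j : ℕ, ChainD f (1/((j:ℝ)+1)) (if Even j then a else b)
      (if Even (j+1) then a else b) := by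
    intro j
    have hcab : ChainD f (1/((j:ℝ)+1)) a b :=
      chain_of_preconnected he ht ha hb (by positivity)
    by_cases hj : Even j
    · rw [if_pos hj, if_neg (by simp [Nat.even_add_one, hj])]
      exact hcab
    · rw [if_neg hj, if_pos (Nat.even_add_one.2 hj)]
      exact hcab.symm
  have hsel : ∀ j : ℕ, ∃ c : ℕ → X, ∃ k : ℕ, 1 ≤ k ∧ c 0 = (if Even j then a else b) ∧
      (∀ i, k ≤ i → c i = (if Even (j+1) then a else b)) ∧
      ∀ i, DD f (c i) (c (i+1)) ≤ 1/((j:ℝ)+1) := by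
    intro j
    obtain ⟨c, k, h0, hk, hs⟩ := hchains j
    exact ⟨c, max k 1, le_max_right _ _, h0,
      fun i hi => hk i (le_trans (le_max_left _ _) hi), hs⟩
  choose ch len hlen1 hch0 hchk hchs using hsel
  set g : ℕ → ℕ × ℕ := fun n => n.rec ((0,0) : ℕ × ℕ)
      (fun _ p => if p.2 + 1 < len p.1 then (p.1, p.2 + 1) else (p.1 + 1, 0)) with hgdef
  have hg0 : g 0 = (0,0) := rfl
  have hgs : ∀ n, g (n+1) =
      (if (g n).2 + 1 < len (g n).1 then ((g n).1, (g n).2 + 1) else ((g n).1 + 1, 0)) :=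
    fun n => rfl
  have hmono : ∀ n, (g n).1 ≤ (g (n+1)).1 := by
    intro n; rw [hgs n]; split <;> simp
  have hmono' : ∀ n n', n ≤ n' → (g n).1 ≤ (g n').1 := by
    intro n n' h
    induction h with
    | refl => exact le_rfl
    | step _ ih => exact ih.trans (hmono _)
  have hreach : ∀ j, ∃ n, g n = (j, 0) := by
    intro j
    induction j with
    | zero => exact ⟨0, hg0⟩
    | succ j ih =>
      obtain ⟨n, hn⟩ := ih
      have hstep : ∀ o, o < len j → g (n + o) = (j, o) := by
        intro o
        induction o with
        | zero => intro _; simpa using hn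
        | succ o iho =>
          intro ho
          have h1 := iho (by omega)
          rw [show n + (o+1) = (n+o)+1 from rfl, hgs (n+o), h1]
          simp [ho]
      have hlast := hstep (len j - 1) (by have := hlen1 j; omega)
      refine ⟨n + (len j - 1) + 1, ?_⟩
      rw [hgs _, hlast]
      dsimp only
      rw [if_neg (by have := hlen1 j; omega)]
  have hblock_le : ∀ n, (g n).1 ≤ n := by
    intro n; induction n with
    | zero => simp [hg0]
    | succ n ih =>
      have h2 : (g (n+1)).1 ≤ (g n).1 + 1 := by rw [hgs n]; split <;> simp
      omega
  set c : ℕ → X := fun n => ch (g n).1 (g n).2 with hc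
  have hcstep : ∀ n, DD f (c n) (c (n+1)) ≤ 1/(((g n).1 : ℝ)+1) := by
    intro n
    simp only [hc]
    rw [hgs n]
    by_cases hcond : (g n).2 + 1 < len (g n).1
    · rw [if_pos hcond]
      dsimp only
      exact hchs _ _
    · rw [if_neg hcond]
      dsimp only
      have hoffn : (g n).2 < len (g n).1 := by
        clear hcond
        induction n with
        | zero => rw [hg0]; exact hlen1 0
        | succ n ih =>
          rw [hgs n]
          by_cases h : (g n).2 + 1 < len (g n).1
          · rw [if_pos h]; simpa using h
          · rw [if_neg h]; simpa using Nat.lt_of_lt_of_le Nat.zero_lt_one (hlen1 _)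
      have heq : ch ((g n).1 + 1) 0 = ch (g n).1 ((g n).2 + 1) := by
        rw [hch0 ((g n).1 + 1), hchk (g n).1 ((g n).2 + 1) (by omega)]
      rw [heq]
      exact hchs _ _
  have hpo : IsLimitPseudoOrbit f (fun n => f^[n] (c n)) := by
    rw [IsLimitPseudoOrbit, Metric.tendsto_atTop]
    intro ε hε
    obtain ⟨J, hJ⟩ : ∃ J : ℕ, 1/((J:ℝ)+1) < ε := exists_nat_one_div_lt hε
    obtain ⟨n0, hn0⟩ := hreach J
    refine ⟨n0, fun n hn => ?_⟩
    have hJn : J ≤ (g n).1 := by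
      have h := hmono' n0 n hn
      rw [hn0] at h; exact h
    have hstepD : dist (f (f^[n] (c n))) (f^[n+1] (c (n+1))) ≤ 1/(((g n).1:ℝ)+1) := by
      rw [← Function.iterate_succ_apply' f n (c n)]
      calc dist (f^[n+1] (c n)) (f^[n+1] (c (n+1)))
          ≤ DD f (f^[n+1] (c n)) (f^[n+1] (c (n+1))) := dist_le_D ..
        _ ≤ DD f (c n) (c (n+1)) := D_iterate_le ..
        _ ≤ 1/(((g n).1:ℝ)+1) := hcstep n
    have hmono1 : 1/(((g n).1:ℝ)+1) ≤ 1/((J:ℝ)+1) := by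
      have hcast : (J:ℝ) ≤ ((g n).1 : ℝ) := Nat.cast_le.2 hJn
      exact one_div_le_one_div_of_le (by positivity) (by linarith)
    rw [Real.dist_0_eq_abs, abs_of_nonneg dist_nonneg]
    exact lt_of_le_of_lt (hstepD.trans hmono1) hJ
  obtain ⟨y, hy⟩ := hls (fun n => f^[n] (c n)) hpo
  have hpoint : ∀ j n, g n = (j, 0) → c n = (if Even j then a else b) := by
    intro j n hn
    have h1 : c n = ch j 0 := by simp only [hc]; rw [hn]
    rw [h1, hch0 j]
  have hfin : ∀ p : X, (∀ M : ℕ, ∃ n, M ≤ n ∧ c n = p) → p = y := by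
    intro p hp
    refine eq_of_forall_D_le (f := f) fun ε hε => ?_
    obtain ⟨δ, hδ, hmod⟩ := D_mod he ε hε
    obtain ⟨M, hM⟩ := (Metric.tendsto_atTop.1 hy) δ hδ
    obtain ⟨n, hnM, hcn⟩ := hp M
    have h1 := hM n hnM
    rw [Real.dist_0_eq_abs, abs_of_nonneg dist_nonneg] at h1
    have h2 : dist (f^[n] p) (f^[n] y) ≤ δ := by
      rw [← hcn]
      exact h1.le
    have h3 := hmod _ _ h2
    rw [D_iterate_eq hsur he] at h3
    exact h3
  have hay : a = y := by
    refine hfin a fun M => ?_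
    obtain ⟨n, hn⟩ := hreach (2*M)
    refine ⟨n, ?_, ?_⟩
    · have h := hblock_le n
      rw [hn] at h
      dsimp only at h
      omega
    · rw [hpoint (2*M) n hn, if_pos (even_two_mul M)]
  have hby : b = y := by
    refine hfin b fun M => ?_
    obtain ⟨n, hn⟩ := hreach (2*M+1)
    refine ⟨n, ?_, ?_⟩
    · have h := hblock_le n
      rw [hn] at h
      dsimp only at h
      omega
    · rw [hpoint (2*M+1) n hn, if_neg (by simp [Nat.even_add_one, even_two_mul])]
  rw [hay, hby]

end ShadowAux


/-- for an equicontinuous homeomorphism of a compact metric space,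
limit shadowing ↔ shadowing ↔ total disconnectedness. -/
theorem equicontinuous_homeo_limit_shadowing_iff_shadowing_iff_tot_disc
    [CompactSpace X] (f : X → X) (hf : IsHomeomorph f) (he : EquicontMap f) :
    (HasLimitShadowing f ↔ HasShadowing f) ∧
      (HasShadowing f ↔ TotallyDisconnectedSpace X) := by
  have hsur : Function.Surjective f := hf.surjective
  refine ⟨⟨fun hls => ?_, fun hsh => ?_⟩, ⟨fun hsh => TD_of_shadowing hsur he hsh, fun hTD => ?_⟩⟩
  · haveI := TD_of_limitShadowing hsur he hls
    exact shadowing_of_TD he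
  · haveI := TD_of_shadowing hsur he hsh
    exact limitShadowing_of_TD hsur he
  · haveI := hTD
    exact shadowing_of_TD he
end

section
/- Let f be an equicontinuous map of a compact metric space X with dim X = 0 (X totally disconnected). Then for every ε>0 there exists δ>0 such that every δ-pseudo orbit (x_i)_{i≥0} of f is ε-shadowed by its own initial point x_0, i.e., d(x_i, f^i(x_0)) ≤ ε for all i ≥ 0. -/
open Filter Topology

variable {X : Type*} [MetricSpace X]

/-- Chain lemma: in a compact totally disconnected metric space, for every ε > 0
there is δ > 0 such that any δ-chain has endpoints at distance ≤ ε. -/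
lemma chain_diam_le [CompactSpace X] [TotallyDisconnectedSpace X]
    (ε : ℝ) (hε : 0 < ε) :
    ∃ δ > 0, ∀ (m : ℕ) (c : ℕ → X), (∀ j < m, dist (c j) (c (j + 1)) ≤ δ) →
      dist (c 0) (c m) ≤ ε := by
  rcases isEmpty_or_nonempty X with h | h
  · exact ⟨1, one_pos, fun m c _ => (h.false (c 0)).elim⟩
  have hcov : ∀ x : X, ∃ s : Set X, IsClopen s ∧ x ∈ s ∧ s ⊆ Metric.ball x (ε / 2) := fun x =>
    compact_exists_isClopen_in_isOpen Metric.isOpen_ball (Metric.mem_ball_self (by linarith))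
  choose V hVclopen hVmem hVball using hcov
  obtain ⟨t, ht⟩ := IsCompact.elim_finite_subcover isCompact_univ V
    (fun x => (hVclopen x).2) (fun x _ => Set.mem_iUnion.2 ⟨x, hVmem x⟩)
  -- for each y, a positive radius keeping you inside V y
  have hgap : ∀ y : X, ∃ r > 0, ∀ a ∈ V y, ∀ b, dist b a < r → b ∈ V y := by
    intro y
    obtain ⟨r, hr, hsub⟩ := ((hVclopen y).1.isCompact).exists_thickening_subset_open
      (hVclopen y).2 subset_rfl
    refine ⟨r, hr, fun a ha b hb => hsub ?_⟩
    exact Metric.mem_thickening_iff.2 ⟨a, ha, hb⟩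
  choose g hg hgmem using hgap
  have htne : t.Nonempty := by
    obtain ⟨x0⟩ := h
    have := ht (Set.mem_univ x0)
    simp only [Set.mem_iUnion] at this
    obtain ⟨y, hy, _⟩ := this
    exact ⟨y, hy⟩
  set δ0 : ℝ := t.inf' htne g with hδ0
  have hδ0pos : 0 < δ0 := (Finset.lt_inf'_iff htne).2 fun y _ => hg y
  refine ⟨δ0 / 2, by linarith, fun m c hc => ?_⟩
  obtain ⟨y0, hy0t, hy0⟩ : ∃ y ∈ t, c 0 ∈ V y := by
    have := ht (Set.mem_univ (c 0))
    simp only [Set.mem_iUnion] at this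
    obtain ⟨y, hy, hmem⟩ := this
    exact ⟨y, hy, hmem⟩
  have hall : ∀ j ≤ m, c j ∈ V y0 := by
    intro j hj
    induction j with
    | zero => exact hy0
    | succ j ih =>
      have hjm : j < m := hj
      have hmem := ih (Nat.le_of_lt hjm)
      refine hgmem y0 (c j) hmem (c (j + 1)) ?_
      have h1 : dist (c (j + 1)) (c j) ≤ δ0 / 2 := by
        rw [dist_comm]; exact hc j hjm
      have h2 : δ0 ≤ g y0 := Finset.inf'_le g hy0t
      linarith
  have h0 : c 0 ∈ Metric.ball y0 (ε / 2) := hVball y0 (hall 0 (Nat.zero_le m))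
  have hm : c m ∈ Metric.ball y0 (ε / 2) := hVball y0 (hall m le_rfl)
  have := dist_triangle (c 0) y0 (c m)
  rw [Metric.mem_ball] at h0 hm
  rw [dist_comm] at hm
  linarith

/-- equicontinuous map of a zero-dimensional compact metric space:
every δ-pseudo orbit is ε-shadowed by its own initial point. -/
theorem equicontinuous_tot_disc_shadowed_by_initial_point
    [CompactSpace X] [TotallyDisconnectedSpace X]
    (f : X → X) (hf : Continuous f) (he : EquicontMap f) :
    ∀ ε > 0, ∃ δ > 0, ∀ x : ℕ → X, IsPseudoOrbit f δ x →
      ∀ i, dist (x i) (f^[i] (x 0)) ≤ ε := by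
  intro ε hε
  obtain ⟨δ, hδ, hchain⟩ := chain_diam_le (X := X) ε hε
  obtain ⟨δ', hδ', hδ'e⟩ := he δ hδ
  refine ⟨δ', hδ', fun x hx i => ?_⟩
  -- key invariant: a chain from x i to f^[i] (x 0) all of whose steps are δ-small
  -- under every iterate of f
  have key : ∀ i, ∃ m, ∃ c : ℕ → X, c 0 = x i ∧ c m = f^[i] (x 0) ∧
      ∀ j < m, ∀ n, dist (f^[n] (c j)) (f^[n] (c (j + 1))) ≤ δ := by
    intro i
    induction i with
    | zero => exact ⟨0, fun _ => x 0, rfl, by simp, fun j hj => absurd hj (Nat.not_lt_zero j)⟩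
    | succ i ih =>
      obtain ⟨m, c, h0, hm, hstep⟩ := ih
      refine ⟨m + 1, fun j => Nat.casesOn j (x (i + 1)) (fun j' => f (c j')), rfl, ?_, ?_⟩
      · show f (c m) = f^[i + 1] (x 0)
        rw [hm, ← Function.iterate_succ_apply' f i (x 0)]
      · intro j hj n
        cases j with
        | zero =>
          show dist (f^[n] (x (i + 1))) (f^[n] (f (c 0))) ≤ δ
          rw [h0, dist_comm]
          exact hδ'e (f (x i)) (x (i + 1)) (hx i) n
        | succ j' =>
          show dist (f^[n] (f (c j'))) (f^[n] (f (c (j' + 1)))) ≤ δ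
          rw [← Function.iterate_succ_apply f n, ← Function.iterate_succ_apply f n]
          exact hstep j' (by omega) (n + 1)
  obtain ⟨m, c, h0, hm, hstep⟩ := key i
  have := hchain m c (fun j hj => by simpa using hstep j hj 0)
  rwa [h0, hm] at this
end

section
/- Let f be a surjective isometry of a compact metric space X that is totally disconnected. Then f has the limit shadowing property: every sequence (x_i)_{i≥0} with lim d(f(x_i),x_{i+1}) = 0 admits y ∈ X with lim d(x_i, f^i(y)) = 0. -/
open Filter Topology

variable {X : Type*} [MetricSpace X]

/-- In a compact totally disconnected metric space, a sequence whose consecutive steps tend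
to zero has at most one cluster point. -/
theorem clusterPt_unique_of_steps_tendsto_zero
    {X : Type*} [MetricSpace X] [CompactSpace X] [TotallyDisconnectedSpace X]
    (u : ℕ → X) (hstep : Tendsto (fun i => dist (u (i + 1)) (u i)) atTop (nhds 0))
    {a b : X} (ha : MapClusterPt a atTop u) (hb : MapClusterPt b atTop u) : a = b := by
  by_contra hab
  obtain ⟨C, hC, haC, hbC⟩ := exists_isClopen_of_totally_separated hab
  obtain ⟨δ, hδ, hthick⟩ :=
    (hC.isClosed.isCompact).exists_thickening_subset_open hC.isOpen subset_rfl
  have hs : ∀ᶠ i in atTop, dist (u (i + 1)) (u i) < δ :=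
    (hstep.eventually (gt_mem_nhds hδ))
  obtain ⟨N, hN⟩ := Filter.eventually_atTop.1 hs
  have hfa : ∃ᶠ i in atTop, u i ∈ C :=
    (mapClusterPt_iff_frequently.1 ha) C (hC.isOpen.mem_nhds haC)
  obtain ⟨i₀, hi₀C, hi₀N⟩ := (hfa.and_eventually (Filter.eventually_ge_atTop N)).exists
  have key : ∀ m, i₀ ≤ m → u m ∈ C := by
    intro m hm
    induction m, hm using Nat.le_induction with
    | base => exact hi₀C
    | succ m hm ih =>
      apply hthick
      rw [Metric.mem_thickening_iff]
      exact ⟨u m, ih, hN m (le_trans hi₀N hm)⟩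
  have hfb : ∃ᶠ i in atTop, u i ∈ Cᶜ :=
    (mapClusterPt_iff_frequently.1 hb) Cᶜ (hC.compl.isOpen.mem_nhds hbC)
  obtain ⟨j, hjC, hji⟩ := (hfb.and_eventually (Filter.eventually_ge_atTop i₀)).exists
  exact hjC (key j hji)

/-- a surjective isometry of a compact totally disconnected metric space
has the limit shadowing property. -/
theorem surjective_isometry_tot_disc_limit_shadowing
    [CompactSpace X] [TotallyDisconnectedSpace X]
    (f : X → X) (hf : Isometry f) (hsurj : Function.Surjective f) :
    HasLimitShadowing f := by
  intro x hx
  have : Nonempty X := ⟨x 0⟩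
  have hinj : Function.Injective f := hf.injective
  set g := Function.invFun f with hg_def
  have hgf : Function.LeftInverse g f := Function.leftInverse_invFun hinj
  have hfg : Function.RightInverse g f := Function.rightInverse_invFun hsurj
  have hg : Isometry g := fun p q => by
    rw [← hf (g p) (g q), hfg p, hfg q]
  have hgit : ∀ n : ℕ, Isometry g^[n] := fun n =>
    Nat.rec isometry_id (fun n ih => by rw [Function.iterate_succ]; exact ih.comp hg) n
  set u : ℕ → X := fun i => g^[i] (x i) with hu_def
  have hstep : Tendsto (fun i => dist (u (i + 1)) (u i)) atTop (nhds 0) := by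
    have heq : (fun i => dist (u (i + 1)) (u i)) =
        fun i => dist (f (x i)) (x (i + 1)) := by
      funext i
      have h1 : g^[i + 1] (f (x i)) = u i := by
        rw [Function.iterate_succ_apply, hgf (x i)]
      calc dist (u (i + 1)) (u i) = dist (g^[i + 1] (x (i + 1))) (g^[i + 1] (f (x i))) := by
            rw [h1]
        _ = dist (x (i + 1)) (f (x i)) := (hgit (i + 1)).dist_eq _ _
        _ = dist (f (x i)) (x (i + 1)) := dist_comm _ _
    rw [heq]
    exact hx
  obtain ⟨y, φ, hφ, hyφ⟩ := CompactSpace.tendsto_subseq u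
  have hy : MapClusterPt y atTop u := .of_comp hφ.tendsto_atTop hyφ.mapClusterPt
  have huy : Tendsto u atTop (nhds y) := by
    rw [Metric.tendsto_atTop]
    by_contra hcon
    push_neg at hcon
    obtain ⟨ε, hε, hfr⟩ := hcon
    have hfr' : ∀ N, ∃ n > N, ε ≤ dist (u n) y := by
      intro N
      obtain ⟨n, hn, hn'⟩ := hfr (N + 1)
      exact ⟨n, lt_of_lt_of_le (Nat.lt_succ_self N) hn, hn'⟩
    obtain ⟨ψ, hψ, hψ'⟩ := Nat.exists_strictMono_subsequence hfr'
    obtain ⟨z, ρ, hρ, hzρ⟩ := CompactSpace.tendsto_subseq (u ∘ ψ)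
    have hz : MapClusterPt z atTop u :=
      .of_comp (hψ.comp hρ).tendsto_atTop (by exact hzρ.mapClusterPt)
    have hzy : z = y :=
      clusterPt_unique_of_steps_tendsto_zero u hstep hz hy
    have hdist : ε ≤ dist z y := by
      have : Tendsto (fun k => dist ((u ∘ ψ ∘ ρ) k) y) atTop (nhds (dist z y)) :=
        (Continuous.tendsto (continuous_id.dist continuous_const) z).comp hzρ
      exact le_of_tendsto_of_tendsto' tendsto_const_nhds this (fun k => hψ' (ρ k))
    rw [hzy, dist_self] at hdist
    exact absurd hdist (not_le.2 hε)
  refine ⟨y, ?_⟩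
  have heq2 : (fun i => dist (x i) (f^[i] y)) = fun i => dist (u i) y := by
    funext i
    have h1 : g^[i] (f^[i] y) = y := (hgf.iterate i) y
    calc dist (x i) (f^[i] y) = dist (g^[i] (x i)) (g^[i] (f^[i] y)) :=
          ((hgit i).dist_eq _ _).symm
      _ = dist (u i) y := by rw [h1]
  unfold LimitShadows
  rw [heq2]
  exact tendsto_iff_dist_tendsto_zero.1 huy
end

section
/- Let f be a continuous self-map of a compact metric space and let γ = (x_i)_{i≥0} be a limit pseudo orbit of f. Then the ω-limit set of the sequence γ is contained in the chain recurrent set CR(f), and consequently lim_{i→∞} d(x_i, CR(f)) = 0. -/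
open Filter Topology

variable {X : Type*} [MetricSpace X]

/-- the ω-limit set of a limit pseudo orbit is contained in CR(f), and
the distance from `x i` to CR(f) tends to 0. -/
theorem omega_limit_of_limit_pseudo_orbit_subset_chain_recurrent
    [CompactSpace X] [Nonempty X] (f : X → X) (hf : Continuous f)
    (x : ℕ → X) (hx : IsLimitPseudoOrbit f x) :
    {y : X | MapClusterPt y atTop x} ⊆ ChainRecurrent f ∧
      Tendsto (fun i => Metric.infDist (x i) (ChainRecurrent f)) atTop (nhds 0) := by
  have huc : UniformContinuous f := CompactSpace.uniformContinuous_of_continuous hf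
  have hpart1 : {y : X | MapClusterPt y atTop x} ⊆ ChainRecurrent f := by
    intro y hy δ hδ
    have hδ3 : (0:ℝ) < δ/3 := by linarith
    obtain ⟨δ', hδ'pos, hδ'⟩ := Metric.uniformContinuous_iff.mp huc (δ/3) hδ3
    have hN : ∀ᶠ i in atTop, dist (f (x i)) (x (i+1)) < δ/3 :=
      hx.eventually (gt_mem_nhds hδ3)
    obtain ⟨N, hNspec⟩ := eventually_atTop.mp hN
    have hfreq : ∀ s ∈ nhds y, ∃ᶠ i in atTop, x i ∈ s := mapClusterPt_iff_frequently.mp hy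
    obtain ⟨i, hiN, hiy⟩ := frequently_atTop.mp
      (hfreq _ (Metric.ball_mem_nhds y (lt_min hδ'pos hδ3))) N
    obtain ⟨j, hji, hjy⟩ := frequently_atTop.mp (hfreq _ (Metric.ball_mem_nhds y hδ3)) (i+1)
    rw [Metric.mem_ball, lt_min_iff] at hiy
    rw [Metric.mem_ball] at hjy
    set k := j - i with hk
    have hk1 : 1 ≤ k := by omega
    have hjik : j = i + k := by omega
    refine ⟨k, hk1, fun n => if n = 0 ∨ k ≤ n then y else x (i + n),
      by simp, by simp, fun _ _ => trivial, ?_⟩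
    intro n hn
    have h2 : dist (f (x (i+n))) (x (i+n+1)) ≤ δ/3 := le_of_lt (hNspec (i+n) (by omega))
    have h1 : dist (f (if n = 0 ∨ k ≤ n then y else x (i + n))) (f (x (i+n))) ≤ δ/3 := by
      rcases Nat.eq_zero_or_pos n with h0 | h0
      · subst h0
        rw [if_pos (Or.inl rfl)]
        have : dist y (x (i+0)) < δ' := by rw [dist_comm]; simpa using hiy.1
        exact le_of_lt (hδ' this)
      · rw [if_neg (by omega), dist_self]; positivity
    have h3 : dist (x (i+n+1)) (if n + 1 = 0 ∨ k ≤ n + 1 then y else x (i + (n+1))) ≤ δ/3 := by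
      rcases eq_or_lt_of_le (Nat.succ_le_of_lt hn) with heq | hlt
      · rw [if_pos (Or.inr (le_of_eq heq.symm))]
        have : i + n + 1 = j := by omega
        rw [this]
        exact le_of_lt hjy
      · have he : i + (n+1) = i + n + 1 := by omega
        rw [if_neg (by omega), he, dist_self]; positivity
    have htri := dist_triangle4 (f (if n = 0 ∨ k ≤ n then y else x (i + n)))
      (f (x (i+n))) (x (i+n+1)) (if n + 1 = 0 ∨ k ≤ n + 1 then y else x (i + (n+1)))
    beta_reduce
    linarith
  refine ⟨hpart1, ?_⟩
  rw [NormedAddCommGroup.tendsto_nhds_zero]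
  intro ε hε
  by_contra hcon
  have hfr : ∃ᶠ n in atTop, ε ≤ Metric.infDist (x n) (ChainRecurrent f) := by
    rw [Filter.not_eventually] at hcon
    refine hcon.mono fun n hn => ?_
    rw [Real.norm_eq_abs, not_lt,
      abs_of_nonneg (Metric.infDist_nonneg)] at hn
    exact hn
  set F := atTop ⊓ 𝓟 {n | ε ≤ Metric.infDist (x n) (ChainRecurrent f)} with hF
  haveI hne : F.NeBot := Filter.frequently_iff_neBot.mp hfr
  obtain ⟨y, -, hy⟩ := isCompact_univ.exists_clusterPt (f := Filter.map x F)
    (le_principal_iff.mpr (Filter.univ_mem))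
  have hyCR : y ∈ ChainRecurrent f :=
    hpart1 (hy.mono (Filter.map_mono inf_le_left))
  have hyfar : ε ≤ Metric.infDist y (ChainRecurrent f) := by
    have hle : Filter.map x F ≤ 𝓟 {z | ε ≤ Metric.infDist z (ChainRecurrent f)} := by
      rw [Filter.map_le_iff_le_comap]
      exact le_trans inf_le_right (by
        rw [Filter.comap_principal]
        exact Filter.principal_mono.mpr fun n hn => hn)
    have hcl : y ∈ closure {z | ε ≤ Metric.infDist z (ChainRecurrent f)} :=
      mem_closure_iff_clusterPt.mpr (hy.mono hle)
    have hclosed : IsClosed {z | ε ≤ Metric.infDist z (ChainRecurrent f)} :=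
      isClosed_le continuous_const (Metric.continuous_infDist_pt _)
    rwa [hclosed.closure_eq] at hcl
  have : Metric.infDist y (ChainRecurrent f) = 0 := Metric.infDist_zero_of_mem hyCR
  rw [this] at hyfar
  linarith
end

section
/- Let f be a continuous self-map of a compact metric space. If f has the limit shadowing property around CR(f) (every limit pseudo orbit contained in CR(f) has a limit shadowing point in X), then f has the limit shadowing property (every limit pseudo orbit in X has a limit shadowing point). -/
open Filter Topology

variable {X : Type*} [MetricSpace X]

lemma cluster_chainRecurrent [CompactSpace X] (f : X → X) (hf : Continuous f)
    (x : ℕ → X) (hx : IsLimitPseudoOrbit f x) (φ : ℕ → ℕ) (hφ : StrictMono φ)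
    (p : X) (hp : Tendsto (x ∘ φ) atTop (𝓝 p)) : p ∈ ChainRecurrent f := by
  intro δ hδ
  obtain ⟨δ', hδ'pos, hδ'f⟩ := Metric.uniformContinuous_iff.mp
    (CompactSpace.uniformContinuous_of_continuous hf) (δ / 4) (by linarith)
  obtain ⟨N, hN⟩ := Metric.tendsto_atTop.mp hx (δ / 4) (by linarith)
  obtain ⟨M, hM⟩ := Metric.tendsto_atTop.mp hp (min δ' (δ / 4))
    (lt_min hδ'pos (by linarith))
  have hN' : ∀ n ≥ N, dist (f (x n)) (x (n + 1)) < δ / 4 := by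
    intro n hn
    have := hN n hn
    rwa [Real.dist_eq, sub_zero, abs_of_nonneg dist_nonneg] at this
  set k₁ := max M N with hk₁
  set i := φ k₁ with hi
  set j := φ (k₁ + 1) with hj
  have hij : i < j := hφ (Nat.lt_succ_self k₁)
  have hiN : N ≤ i := le_trans (le_max_right M N) (hφ.le_apply)
  have hdi : dist (x i) p < min δ' (δ / 4) := hM k₁ (le_max_left M N)
  have hdj : dist (x j) p < min δ' (δ / 4) := hM (k₁ + 1)
    (le_trans (le_max_left M N) (Nat.le_succ k₁))
  refine ⟨j - i, by omega, fun m => if 0 < m ∧ m < j - i then x (i + m) else p,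
    by simp, by simp, fun _ _ => Set.mem_univ _, ?_⟩
  intro m hm
  show dist (f (if 0 < m ∧ m < j - i then x (i + m) else p))
      (if 0 < m + 1 ∧ m + 1 < j - i then x (i + (m + 1)) else p) ≤ δ
  by_cases h0 : m = 0
  · subst h0
    by_cases h1 : 1 < j - i
    · simp only [lt_irrefl, false_and, if_false, Nat.lt_irrefl, zero_lt_one, h1,
        and_self, if_true, true_and]
      have h2 : dist (f p) (f (x i)) < δ / 4 := by
        apply hδ'f
        rw [dist_comm]
        exact lt_of_lt_of_le hdi (min_le_left _ _)
      have h3 : dist (f (x i)) (x (i + 1)) < δ / 4 := hN' i hiN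
      calc dist (f p) (x (i + 1)) ≤ dist (f p) (f (x i)) + dist (f (x i)) (x (i + 1)) :=
            dist_triangle _ _ _
        _ ≤ δ := by linarith
    · have hk : j - i = 1 := by omega
      simp only [hk, lt_irrefl, false_and, if_false, zero_lt_one, true_and]
      have h2 : dist (f p) (f (x i)) < δ / 4 := by
        apply hδ'f
        rw [dist_comm]
        exact lt_of_lt_of_le hdi (min_le_left _ _)
      have h3 : dist (f (x i)) (x (i + 1)) < δ / 4 := hN' i hiN
      have h4 : dist (x (i + 1)) p < δ / 4 := by
        have : i + 1 = j := by omega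
        rw [this]
        exact lt_of_lt_of_le hdj (min_le_right _ _)
      calc dist (f p) p ≤ dist (f p) (f (x i)) + dist (f (x i)) (x (i + 1))
            + dist (x (i + 1)) p := dist_triangle4 _ _ _ _
        _ ≤ δ := by linarith
  · have h0' : 0 < m := Nat.pos_of_ne_zero h0
    have hcm : (if 0 < m ∧ m < j - i then x (i + m) else p) = x (i + m) := by
      simp [h0', hm]
    rw [hcm]
    have hstep : dist (f (x (i + m))) (x (i + m + 1)) < δ / 4 := hN' (i + m) (by omega)
    by_cases h2 : m + 1 < j - i
    · have : (if 0 < m + 1 ∧ m + 1 < j - i then x (i + (m + 1)) else p) = x (i + m + 1) := by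
        simp [h2, Nat.add_assoc]
      rw [this]
      linarith
    · have hk : m + 1 = j - i := by omega
      have : (if 0 < m + 1 ∧ m + 1 < j - i then x (i + (m + 1)) else p) = p := by
        simp [hk]
      rw [this]
      have h4 : dist (x (i + m + 1)) p < δ / 4 := by
        have : i + m + 1 = j := by omega
        rw [this]
        exact lt_of_lt_of_le hdj (min_le_right _ _)
      calc dist (f (x (i + m))) p ≤ dist (f (x (i + m))) (x (i + m + 1))
            + dist (x (i + m + 1)) p := dist_triangle _ _ _
        _ ≤ δ := by linarith

lemma infDist_CR_tendsto [CompactSpace X] (f : X → X) (hf : Continuous f)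
    (x : ℕ → X) (hx : IsLimitPseudoOrbit f x) :
    Tendsto (fun i => Metric.infDist (x i) (ChainRecurrent f)) atTop (𝓝 0) := by
  rw [Metric.tendsto_atTop]
  intro ε hε
  by_contra hcon
  push_neg at hcon
  have hfreq : ∃ᶠ n in atTop, ε ≤ dist (Metric.infDist (x n) (ChainRecurrent f)) 0 := by
    rw [frequently_atTop]
    intro a
    obtain ⟨n, hn, hn'⟩ := hcon a
    exact ⟨n, hn, hn'⟩
  obtain ⟨φ, hφ, hφ'⟩ := Filter.extraction_of_frequently_atTop hfreq
  obtain ⟨q, -, ψ, hψ, hq⟩ := isCompact_univ.tendsto_subseq (fun n => Set.mem_univ (x (φ n)))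
  have hqCR : q ∈ ChainRecurrent f :=
    cluster_chainRecurrent f hf x hx (φ ∘ ψ) (hφ.comp hψ) q hq
  have h1 : Tendsto (fun n => Metric.infDist (x (φ (ψ n))) (ChainRecurrent f)) atTop
      (𝓝 (Metric.infDist q (ChainRecurrent f))) :=
    ((Metric.continuous_infDist_pt _).tendsto q).comp hq
  have h0 : Metric.infDist q (ChainRecurrent f) = 0 := by
    rw [← Metric.infDist_zero_of_mem hqCR]
  have h2 : ε ≤ Metric.infDist q (ChainRecurrent f) := by
    apply ge_of_tendsto h1
    filter_upwards with n
    have := hφ' (ψ n)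
    rwa [Real.dist_eq, sub_zero, abs_of_nonneg Metric.infDist_nonneg] at this
  rw [h0] at h2
  linarith

/-- limit shadowing around CR(f) implies the limit shadowing property. -/
theorem limit_shadowing_around_CR_implies_limit_shadowing
    [CompactSpace X] (f : X → X) (hf : Continuous f)
    (h : ∀ x : ℕ → X, (∀ i, x i ∈ ChainRecurrent f) → IsLimitPseudoOrbit f x →
      ∃ y, LimitShadows f x y) :
    HasLimitShadowing f := by
  intro x hx
  obtain ⟨q, -, ψ, hψ, hq⟩ := isCompact_univ.tendsto_subseq (fun n => Set.mem_univ (x n))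
  have hqCR : q ∈ ChainRecurrent f := cluster_chainRecurrent f hf x hx ψ hψ q hq
  have hne : (ChainRecurrent f).Nonempty := ⟨q, hqCR⟩
  have hd := infDist_CR_tendsto f hf x hx
  have hz : ∀ i : ℕ, ∃ z ∈ ChainRecurrent f,
      dist (x i) z < Metric.infDist (x i) (ChainRecurrent f) + 1 / (i + 1) := by
    intro i
    apply (Metric.infDist_lt_iff hne).mp
    have h1 : (0:ℝ) < 1 / ((i:ℝ) + 1) := by positivity
    linarith
  choose z hzCR hzd using hz
  have hxz : Tendsto (fun i => dist (x i) (z i)) atTop (𝓝 0) := by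
    apply squeeze_zero (fun i => dist_nonneg) (fun i => (hzd i).le)
    have h2 : Tendsto (fun i : ℕ => (1:ℝ) / ((i:ℝ) + 1)) atTop (𝓝 0) :=
      tendsto_one_div_add_atTop_nhds_zero_nat
    simpa using hd.add h2
  have hfz : Tendsto (fun i => dist (f (x i)) (f (z i))) atTop (𝓝 0) := by
    have h5 : Tendsto (fun i => (x i, z i)) atTop (uniformity X) :=
      tendsto_uniformity_iff_dist_tendsto_zero.mpr hxz
    simpa using tendsto_uniformity_iff_dist_tendsto_zero.mp
      (Filter.Tendsto.comp (CompactSpace.uniformContinuous_of_continuous hf) h5)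
  have hzpo : IsLimitPseudoOrbit f z := by
    apply squeeze_zero (fun i => dist_nonneg)
      (fun i => dist_triangle4 (f (z i)) (f (x i)) (x (i + 1)) (z (i + 1)))
    have h3 : Tendsto (fun i => dist (f (z i)) (f (x i))) atTop (𝓝 0) := by
      simpa [dist_comm] using hfz
    have h4 : Tendsto (fun i => dist (x (i + 1)) (z (i + 1))) atTop (𝓝 0) :=
      hxz.comp (tendsto_add_atTop_nat 1)
    simpa using (h3.add hx).add h4
  obtain ⟨y, hy⟩ := h z hzCR hzpo
  refine ⟨y, ?_⟩
  apply squeeze_zero (fun i => dist_nonneg)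
    (fun i => dist_triangle (x i) (z i) (f^[i] y))
  simpa using hxz.add hy
end

section
/- Let f be a continuous self-map of a compact metric space. If the restriction f|_{CR(f)} has the limit shadowing property, then f has the limit shadowing property. -/
open Filter Topology

variable {X : Type*} [MetricSpace X]

private lemma dist_comp_tendsto_zero {X : Type*} [MetricSpace X] {f : X → X}
    (hf : UniformContinuous f) {a b : ℕ → X}
    (hab : Filter.Tendsto (fun i => dist (a i) (b i)) Filter.atTop (nhds 0)) :
    Filter.Tendsto (fun i => dist (f (a i)) (f (b i))) Filter.atTop (nhds 0) := by
  have h1 : Filter.Tendsto (fun i => (a i, b i)) Filter.atTop (uniformity X) :=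
    tendsto_uniformity_iff_dist_tendsto_zero.2 hab
  have hf' : Filter.Tendsto (fun p : X × X => (f p.1, f p.2)) (uniformity X) (uniformity X) := hf
  exact tendsto_uniformity_iff_dist_tendsto_zero.1 (hf'.comp h1)

private lemma clusterPt_mem_CR {X : Type*} [MetricSpace X] [CompactSpace X]
    {f : X → X} (hf : Continuous f)
    {x : ℕ → X} (hx : IsLimitPseudoOrbit f x) {z : X} (hz : MapClusterPt z Filter.atTop x) :
    z ∈ ChainRecurrent f := by
  intro δ hδ
  have hδ3 : 0 < δ / 3 := by linarith
  obtain ⟨η, hη, hηf⟩ := Metric.uniformContinuous_iff.1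
    (CompactSpace.uniformContinuous_of_continuous hf) (δ / 3) hδ3
  have hev : ∀ᶠ i in Filter.atTop, dist (f (x i)) (x (i + 1)) < δ / 3 :=
    hx.eventually (gt_mem_nhds hδ3)
  obtain ⟨N, hN⟩ := Filter.eventually_atTop.1 hev
  set r : ℝ := min η (δ / 3) with hr
  have hrpos : 0 < r := lt_min hη hδ3
  have hfreq := mapClusterPt_iff_frequently.1 hz (Metric.ball z r) (Metric.ball_mem_nhds z hrpos)
  obtain ⟨i, ⟨hiball, hiN⟩⟩ := (hfreq.and_eventually (Filter.eventually_ge_atTop N)).exists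
  obtain ⟨j, ⟨hjball, hji⟩⟩ := (hfreq.and_eventually (Filter.eventually_ge_atTop (i + 1))).exists
  have hiz : dist (x i) z < r := hiball
  have hjz : dist (x j) z < r := hjball
  set k : ℕ := j - i with hkdef
  have hk1 : 1 ≤ k := by omega
  have hik : i + k = j := by omega
  set c : ℕ → X := fun m => if m = 0 ∨ m = k then z else x (i + m) with hc
  have hc0 : c 0 = z := by simp [hc]
  have hck : c k = z := by simp [hc]
  have hcmid : ∀ m, ¬(m = 0 ∨ m = k) → c m = x (i + m) := fun m hm => if_neg hm
  refine ⟨k, hk1, c, hc0, hck, fun m _ => Set.mem_univ _, ?_⟩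
  intro m hm
  have hfz : dist (f z) (f (x i)) < δ / 3 := by
    refine hηf ?_
    calc dist z (x i) = dist (x i) z := dist_comm _ _
      _ < r := hiz
      _ ≤ η := min_le_left _ _
  have hxz : dist (x i) z < δ / 3 := lt_of_lt_of_le hiz (min_le_right _ _)
  have hxjz : dist (x j) z < δ / 3 := lt_of_lt_of_le hjz (min_le_right _ _)
  rcases Nat.eq_zero_or_pos m with hm0 | hmpos
  · subst hm0
    rw [hc0]
    have herri : dist (f (x i)) (x (i + 1)) < δ / 3 := hN i hiN
    by_cases hk : k = 1
    · have h01 : (0 : ℕ) + 1 = k := by omega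
      rw [h01, hck]
      have hj' : j = i + 1 := by omega
      have h3 : dist (x (i + 1)) z < δ / 3 := by rw [← hj']; exact hxjz
      have htri := dist_triangle4 (f z) (f (x i)) (x (i + 1)) z
      linarith
    · have h1 : c (0 + 1) = x (i + 1) := hcmid 1 (by omega)
      rw [h1]
      have htri := dist_triangle (f z) (f (x i)) (x (i + 1))
      linarith
  · have hm0' : c m = x (i + m) := hcmid m (by omega)
    rw [hm0']
    have herrm : dist (f (x (i + m))) (x (i + m + 1)) < δ / 3 := hN (i + m) (by omega)
    by_cases hk : m + 1 = k
    · rw [hk, hck]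
      have hjm : i + m + 1 = j := by omega
      have h3 : dist (x (i + m + 1)) z < δ / 3 := by rw [hjm]; exact hxjz
      have htri := dist_triangle (f (x (i + m))) (x (i + m + 1)) z
      linarith
    · have h1 : c (m + 1) = x (i + (m + 1)) := hcmid (m + 1) (by omega)
      rw [h1]
      have : i + (m + 1) = i + m + 1 := by ring
      rw [this]
      linarith

/-- if f|_{CR(f)} has the limit shadowing property, so does f. -/
theorem restriction_CR_limit_shadowing_implies_limit_shadowing
    [CompactSpace X] (f : X → X) (hf : Continuous f)
    (h : ∀ x : ℕ → X, (∀ i, x i ∈ ChainRecurrent f) → IsLimitPseudoOrbit f x →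
      ∃ y ∈ ChainRecurrent f, LimitShadows f x y) :
    HasLimitShadowing f := by 
  intro x hx
  have hC : ∀ {z : X}, MapClusterPt z Filter.atTop x → z ∈ ChainRecurrent f :=
    fun hz => clusterPt_mem_CR hf hx hz
  obtain ⟨z0, hz0⟩ := exists_clusterPt_of_compactSpace (Filter.map x Filter.atTop)
  have hz0CR : z0 ∈ ChainRecurrent f := hC hz0
  have hCne : (ChainRecurrent f).Nonempty := ⟨z0, hz0CR⟩
  -- infDist to CR tends to 0
  have hinf : Tendsto (fun i => Metric.infDist (x i) (ChainRecurrent f)) atTop (nhds 0) := by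
    by_contra hcon
    rw [Metric.tendsto_atTop] at hcon
    push_neg at hcon
    obtain ⟨ε, hε, hfr⟩ := hcon
    have hfreq : ∃ᶠ n in atTop, ε ≤ Metric.infDist (x n) (ChainRecurrent f) := by
      rw [Filter.frequently_atTop]
      intro a
      obtain ⟨n, hn, hn2⟩ := hfr a
      refine ⟨n, hn, ?_⟩
      rw [Real.dist_eq, sub_zero, abs_of_nonneg Metric.infDist_nonneg] at hn2
      exact hn2
    set S : Set ℕ := {n | ε ≤ Metric.infDist (x n) (ChainRecurrent f)} with hS
    have hne : (atTop ⊓ Filter.principal S).NeBot := Filter.frequently_iff_neBot.1 hfreq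
    obtain ⟨z, hz⟩ := exists_clusterPt_of_compactSpace (Filter.map x (atTop ⊓ Filter.principal S))
    have hzmap : MapClusterPt z (atTop ⊓ Filter.principal S) x := hz
    have hzCR : z ∈ ChainRecurrent f :=
      hC (hzmap.mono (Filter.map_mono inf_le_left))
    have hball := mapClusterPt_iff_frequently.1 hzmap (Metric.ball z ε) (Metric.ball_mem_nhds z hε)
    have hevS : ∀ᶠ n in atTop ⊓ Filter.principal S, n ∈ S :=
      Filter.eventually_inf_principal.2 (Filter.Eventually.of_forall fun n hn => hn)
    obtain ⟨n, hn1, hn2⟩ := (hball.and_eventually hevS).exists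
    have : Metric.infDist (x n) (ChainRecurrent f) ≤ dist (x n) z :=
      Metric.infDist_le_dist_of_mem hzCR
    have : ε ≤ dist (x n) z := le_trans hn2 this
    exact absurd hn1 (not_lt.2 this)
  -- choose nearby points in CR
  have hch : ∀ i : ℕ, ∃ w ∈ ChainRecurrent f,
      dist (x i) w < Metric.infDist (x i) (ChainRecurrent f) + 1 / (i + 1) := by
    intro i
    refine (Metric.infDist_lt_iff hCne).1 ?_
    have : (0:ℝ) < 1 / (i + 1) := by positivity
    linarith
  choose x' hx'C hx'd using hch
  have hone : Tendsto (fun i : ℕ => (1:ℝ) / (i + 1)) atTop (nhds 0) :=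
    tendsto_one_div_add_atTop_nhds_zero_nat
  have hsum : Tendsto (fun i => Metric.infDist (x i) (ChainRecurrent f) + 1 / (i + 1))
      atTop (nhds 0) := by
    have := hinf.add hone
    simpa using this
  have hd0 : Tendsto (fun i => dist (x i) (x' i)) atTop (nhds 0) :=
    squeeze_zero (fun i => dist_nonneg) (fun i => (hx'd i).le) hsum
  have hd0' : Tendsto (fun i => dist (x' i) (x i)) atTop (nhds 0) := by
    simpa [dist_comm] using hd0
  -- x' is a limit pseudo orbit
  have hx' : IsLimitPseudoOrbit f x' := by
    have h1 : Tendsto (fun i => dist (f (x' i)) (f (x i))) atTop (nhds 0) :=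
      dist_comp_tendsto_zero (CompactSpace.uniformContinuous_of_continuous hf) hd0'
    have h2 : Tendsto (fun i => dist (x (i+1)) (x' (i+1))) atTop (nhds 0) :=
      hd0.comp (Filter.tendsto_add_atTop_nat 1)
    have hsum2 : Tendsto (fun i => dist (f (x' i)) (f (x i)) + dist (f (x i)) (x (i+1))
        + dist (x (i+1)) (x' (i+1))) atTop (nhds 0) := by
      have := (h1.add hx).add h2
      simpa using this
    exact squeeze_zero (fun i => dist_nonneg)
      (fun i => dist_triangle4 (f (x' i)) (f (x i)) (x (i+1)) (x' (i+1))) hsum2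
  obtain ⟨y, _, hLS⟩ := h x' hx'C hx'
  refine ⟨y, ?_⟩
  have hsum3 : Tendsto (fun i => dist (x i) (x' i) + dist (x' i) (f^[i] y)) atTop (nhds 0) := by
    have := hd0.add hLS
    simpa using this
  exact squeeze_zero (fun i => dist_nonneg)
    (fun i => dist_triangle (x i) (x' i) (f^[i] y)) hsum3
end
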